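/- arXiv:2106.01634 — 4 statements merged into one kernel-verified Lean document; each statement's English description precedes it below -/
import Mathlib

section
/- For every integer s ≥ 9 with s ≠ 11 and s ≢ 0 (mod 4), the graph T(1,s,2) satisfies: its chromatic number equals 5, it is 5-choosable, and it is not 4-choosable; hence its choice number equals its chromatic number, both being 5. -/
/-- The neighbour relation underlying Altshuler's toroidal triangulation `T(r,s,t)`:
`Tnbr r s t u v` says that `v` is one of the six listed neighbours of `u`. -/
def Tnbr (r s t : ℕ) (u v : ZMod r × ZMod s) : Prop :=
  if r = 1 then
    v.1 = u.1 ∧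
      (v.2 = u.2 + 1 ∨ v.2 = u.2 - 1 ∨ v.2 = u.2 + (t : ZMod s) ∨ v.2 = u.2 - (t : ZMod s) ∨
        v.2 = u.2 + ((t : ZMod s) + 1) ∨ v.2 = u.2 - ((t : ZMod s) + 1))
  else if u.1 = 1 then
    (v.1 = u.1 ∧ (v.2 = u.2 + 1 ∨ v.2 = u.2 - 1)) ∨
    (v.1 = u.1 + 1 ∧ (v.2 = u.2 ∨ v.2 = u.2 - 1)) ∨
    (v.1 = u.1 - 1 ∧ (v.2 = u.2 + (t : ZMod s) + 1 ∨ v.2 = u.2 + (t : ZMod s)))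
  else if u.1 = 0 then
    (v.1 = u.1 ∧ (v.2 = u.2 + 1 ∨ v.2 = u.2 - 1)) ∨
    (v.1 = u.1 - 1 ∧ (v.2 = u.2 + 1 ∨ v.2 = u.2)) ∨
    (v.1 = u.1 + 1 ∧ (v.2 = u.2 - (t : ZMod s) ∨ v.2 = u.2 - (t : ZMod s) - 1))
  else
    (v.1 = u.1 ∧ (v.2 = u.2 + 1 ∨ v.2 = u.2 - 1)) ∨
    (v.1 = u.1 + 1 ∧ (v.2 = u.2 ∨ v.2 = u.2 - 1)) ∨
    (v.1 = u.1 - 1 ∧ (v.2 = u.2 ∨ v.2 = u.2 + 1))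

/-- Altshuler's `6`-regular toroidal triangulation `T(r,s,t)`, with vertex `(i,j)`
represented by the pair `(i mod r, j mod s)`. -/
def T (r s t : ℕ) : SimpleGraph (ZMod r × ZMod s) where
  Adj u v := u ≠ v ∧ (Tnbr r s t u v ∨ Tnbr r s t v u)
  symm := ⟨fun u v h => ⟨h.1.symm, h.2.symm⟩⟩
  loopless := ⟨fun u h => h.1 rfl⟩

/-- `G` is `L`-choosable: there is a proper colouring choosing each colour from its list. -/
def IsLChoosable {V : Type*} (G : SimpleGraph V) (L : V → Finset ℕ) : Prop :=
  ∃ c : V → ℕ, (∀ v, c v ∈ L v) ∧ ∀ u v, G.Adj u v → c u ≠ c v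

/-- `G` is `k`-choosable: `G` is `L`-choosable for every list assignment of `k`-lists. -/
def Choosable {V : Type*} (G : SimpleGraph V) (k : ℕ) : Prop :=
  ∀ L : V → Finset ℕ, (∀ v, k ≤ (L v).card) → IsLChoosable G L

/-!
`T(1,s,2)` is the cube `C_s³` of the `s`-cycle. Colouring greedily along `1, 2, …, s-1, 0`
only gets stuck at the last few vertices, which have up to six earlier neighbours; a "plan"
precolours `1, 2, 3` (and possibly one vertex just before `0`) from their lists so that
enough colours stay free there. If no plan works at any seam and in either direction, then
either two lists at distance `4` meet, and the failure of plan `C` propagates along the cycle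
until all lists coincide, where the colouring by blocks `0123…0123 01234…01234` of a
decomposition `s = 4a + 5b` (which exists for `s ≥ 9`, `s ≠ 11`) applies; or all lists at
distance `4` are disjoint, and the failures of plans `A` and `F` around a single seam
contradict each other. Four colours never suffice when `4 ∤ s`: in a `4`-colouring the clique
`z+1, z+2, z+3` forces `z` and `z + 4` to share a colour, so the colouring is `4`-periodic,
hence `gcd(4, s)`-periodic.
-/

open Finset SimpleGraph

section ListColoring

variable {V W : Type*} {G : SimpleGraph V} {H : SimpleGraph W}

lemma IsLChoosable.of_hom (f : H →g G) {L : V → Finset ℕ} {M : W → Finset ℕ}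
    (hLM : ∀ w, L (f w) ⊆ M w) (h : IsLChoosable G L) : IsLChoosable H M := by
  obtain ⟨c, hcL, hc⟩ := h
  exact ⟨c ∘ f, fun w => hLM w (hcL (f w)), fun u v huv => hc _ _ (f.map_adj huv)⟩

lemma Choosable.of_forall_card_eq {k : ℕ}
    (h : ∀ L : V → Finset ℕ, (∀ v, #(L v) = k) → IsLChoosable G L) : Choosable G k := by
  intro L hL
  choose M hML hM using fun v => exists_subset_card_eq (hL v)
  obtain ⟨c, hcM, hc⟩ := h M hM
  exact ⟨c, fun v => hML v (hcM v), hc⟩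

lemma Choosable.colorable {k : ℕ} (h : Choosable G k) : G.Colorable k := by
  obtain ⟨c, hc, hadj⟩ := h (fun _ => range k) fun _ => (card_range k).ge
  exact ⟨Coloring.mk (fun v => ⟨c v, mem_range.1 (hc v)⟩)
    fun huv heq => hadj _ _ huv (congrArg Fin.val heq)⟩

lemma SimpleGraph.Colorable.isLChoosable_const {k : ℕ} {X : Finset ℕ} (hG : G.Colorable k)
    (hX : k ≤ #X) : IsLChoosable G fun _ => X := by
  obtain ⟨Y, hYX, hY⟩ := exists_subset_card_eq hX
  obtain ⟨C⟩ := hG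
  exact ⟨fun v => Y.orderEmbOfFin hY (C v), fun v => hYX (orderEmbOfFin_mem _ _ _),
    fun u v huv heq => C.valid huv ((Y.orderEmbOfFin hY).injective heq)⟩

end ListColoring

section Greedy

variable {G : SimpleGraph ℕ} {n : ℕ} {L : ℕ → Finset ℕ} {P : Finset ℕ} {c₀ : ℕ → ℕ}

variable (G n L P c₀) in
def IsGreedyPrefix (c : ℕ → ℕ) (m : ℕ) : Prop :=
  (∀ i ∈ P, c i = c₀ i) ∧ (∀ j < m, j ∉ P → c j ∈ L j) ∧
    ∀ i < n, ∀ j < n, G.Adj i j → (i < m ∨ i ∈ P) → (j < m ∨ j ∈ P) → c i ≠ c j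

lemma IsGreedyPrefix.exists_succ {c : ℕ → ℕ} {m : ℕ} (h : IsGreedyPrefix G n L P c₀ c m)
    (hmP : m ∉ P) {B K : Finset ℕ}
    (hBK : ∀ i < n, G.Adj i m → i < m ∨ i ∈ P → i ∈ B ∨ i ∈ P ∧ c₀ i ∈ K)
    (hcard : #B + #(L m ∩ K) < #(L m)) :
    ∃ c', IsGreedyPrefix G n L P c₀ c' (m + 1) := by
  obtain ⟨hcP, hcL, hc⟩ := h
  obtain ⟨x, hxL, hx⟩ := exists_mem_notMem_of_card_lt_card (s := B.image c ∪ (L m ∩ K))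
    ((card_union_le _ _).trans_lt ((Nat.add_le_add_right card_image_le _).trans_lt hcard))
  have hxm : ∀ i < n, G.Adj i m → (i < m ∨ i ∈ P) → c i ≠ x := by
    intro i hi hadj hi'
    rcases hBK i hi hadj hi' with hiB | ⟨hiP, hiK⟩
    · exact fun h => hx (mem_union_left _ (mem_image.2 ⟨i, hiB, h⟩))
    · exact fun h => hx (mem_union_right _ (mem_inter.2 ⟨hxL, h ▸ hcP i hiP ▸ hiK⟩))
  refine ⟨Function.update c m x, fun i hi => ?_, fun j hj hjP => ?_,
    fun i hi j hj hij hi' hj' => ?_⟩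
  · rw [Function.update_of_ne (by grind)]
    exact hcP i hi
  · rcases eq_or_ne j m with rfl | hjm
    · simpa using hxL
    · rw [Function.update_of_ne hjm]
      exact hcL j (by omega) hjP
  · have hne := hij.ne
    rcases eq_or_ne i m with rfl | him
    · rw [Function.update_self, Function.update_of_ne hne.symm]
      exact (hxm j hj hij.symm (by grind)).symm
    rcases eq_or_ne j m with rfl | hjm
    · rw [Function.update_self, Function.update_of_ne him]
      exact hxm i hi hij (by grind)
    rw [Function.update_of_ne him, Function.update_of_ne hjm]
    exact hc i hi j hj hij (by grind) (by grind)

variable (G n L P c₀) in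
/-- An already coloured neighbour `i` of `j` is charged either by its index (`i ∈ B`) or,
if precoloured, by its colour (`c₀ i ∈ K`). -/
theorem exists_listColoring_of_precoloring (hc₀L : ∀ i ∈ P, c₀ i ∈ L i)
    (hc₀ : ∀ i ∈ P, ∀ j ∈ P, G.Adj i j → c₀ i ≠ c₀ j)
    (hfree : ∀ j < n, j ∉ P → ∃ B K : Finset ℕ,
      (∀ i < n, G.Adj i j → i < j ∨ i ∈ P → i ∈ B ∨ i ∈ P ∧ c₀ i ∈ K) ∧
        #B + #(L j ∩ K) < #(L j)) :
    ∃ c : ℕ → ℕ, (∀ j < n, c j ∈ L j) ∧ ∀ i < n, ∀ j < n, G.Adj i j → c i ≠ c j := by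
  have greedy : ∀ m ≤ n, ∃ c, IsGreedyPrefix G n L P c₀ c m := by
    intro m
    induction m with
    | zero => exact fun _ => ⟨c₀, fun _ _ => rfl, by simp,
        fun i _ j _ hij hi hj => hc₀ i (by simpa using hi) j (by simpa using hj) hij⟩
    | succ m ih =>
      intro hm
      obtain ⟨c, hc⟩ := ih (by omega)
      by_cases hmP : m ∈ P
      · obtain ⟨hcP, hcL, hcadj⟩ := hc
        exact ⟨c, hcP, fun j hj hjP => hcL j (by grind) hjP,
          fun i hi j hj hij _ _ => hcadj i hi j hj hij (by grind) (by grind)⟩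
      obtain ⟨B, K, hBK, hcard⟩ := hfree m (by omega) hmP
      exact hc.exists_succ hmP hBK hcard
  obtain ⟨c, hcP, hcL, hc⟩ := greedy n le_rfl
  refine ⟨c, fun j hj => ?_, fun i hi j hj hij => hc i hi j hj hij (.inl hi) (.inl hj)⟩
  by_cases hjP : j ∈ P
  · exact hcP j hjP ▸ hc₀L j hjP
  · exact hcL j hj hjP

end Greedy

abbrev cycleCube (s : ℕ) : SimpleGraph (ZMod s) := circulantGraph {1, 2, 3}

/-- For `i, j < s`: `i ≠ j` at cyclic distance at most `3` modulo `s`. -/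
def CycNear (s i j : ℕ) : Prop :=
  i ≠ j ∧ (i ≤ j + 3 ∧ j ≤ i + 3 ∨ j + s ≤ i + 3 ∨ i + s ≤ j + 3)

section CycleCube

variable {s : ℕ}

lemma T_one_two_adj_iff {u v : ZMod 1 × ZMod s} :
    (T 1 s 2).Adj u v ↔ (cycleCube s).Adj u.2 v.2 := by
  have hne : u ≠ v ↔ u.2 ≠ v.2 :=
    ⟨fun h h2 => h (Prod.ext (Subsingleton.elim _ _) h2), fun h h2 => h (congrArg Prod.snd h2)⟩
  simp only [T, Tnbr, if_pos, circulantGraph_adj, hne, Set.mem_insert_iff,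
    Set.mem_singleton_iff, Subsingleton.elim v.1 u.1, true_and]
  push_cast
  refine and_congr_right fun _ => ?_
  constructor
  · rintro ((h|h|h|h|h|h) | (h|h|h|h|h|h)) <;> rw [h] <;> grind
  · rintro ((h|h|h) | (h|h|h)) <;> grind

lemma natCast_eq_natCast_add_iff {i j k : ℕ} (hi : i < s) (hj : j < s) (hk : k ≤ s) :
    (i : ZMod s) = j + k ↔ i = j + k ∨ i + s = j + k := by
  rw [← Nat.cast_add, ZMod.natCast_eq_natCast_iff', Nat.mod_eq_of_lt hi]
  rcases lt_or_ge (j + k) s with h | h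
  · rw [Nat.mod_eq_of_lt h]; omega
  · rw [Nat.mod_eq_sub_mod h, Nat.mod_eq_of_lt (by omega)]; omega

lemma cycleCube_adj_natCast_iff (hs : 3 ≤ s) {i j : ℕ} (hi : i < s) (hj : j < s) :
    (cycleCube s).Adj i j ↔ CycNear s i j := by
  have key : ∀ {a b : ℕ} (k : ℕ), a < s → b < s → k ≤ 3 →
      ((a : ZMod s) - b = k ↔ a = b + k ∨ a + s = b + k) := fun k ha hb hk => by
    rw [sub_eq_iff_eq_add', natCast_eq_natCast_add_iff ha hb (by omega)]
  have hne : (i : ZMod s) ≠ j ↔ i ≠ j := by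
    have := natCast_eq_natCast_add_iff (k := 0) hi hj (by omega)
    simp only [Nat.cast_zero, add_zero] at this
    rw [Ne, this]; omega
  simp only [circulantGraph_adj, Set.mem_insert_iff, Set.mem_singleton_iff, hne]
  rw [show (1 : ZMod s) = ((1 : ℕ) : ZMod s) by simp,
    show (2 : ZMod s) = ((2 : ℕ) : ZMod s) by simp,
    show (3 : ZMod s) = ((3 : ℕ) : ZMod s) by simp]
  simp only [key _ hi hj (by norm_num : 1 ≤ 3), key _ hi hj (by norm_num : 2 ≤ 3),
    key _ hi hj le_rfl, key _ hj hi (by norm_num : 1 ≤ 3), key _ hj hi (by norm_num : 2 ≤ 3),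
    key _ hj hi le_rfl, CycNear]
  omega

lemma cycleCube_adj_add_natCast (hs : 4 ≤ s) (z : ZMod s) {i j : ℕ} (hij : i < j)
    (hji : j ≤ i + 3) : (cycleCube s).Adj (z + i) (z + j) := by
  have h := (cycleCube_adj_natCast_iff (s := s) (i := 0) (j := j - i) (by omega) (by omega)
    (by omega)).2 (by unfold CycNear; omega)
  have e : z + i + ((j - i : ℕ) : ZMod s) = z + j := by rw [Nat.cast_sub hij.le]; ring
  simpa [add_comm, e] using circulantGraph_adj_translate (d := z + i) |>.2 h

lemma IsLChoosable.of_comp_add {M : ZMod s → Finset ℕ} (p : ZMod s)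
    (h : IsLChoosable (cycleCube s) fun z => M (p + z)) : IsLChoosable (cycleCube s) M :=
  h.of_hom ⟨fun z => z - p, fun huv => by simpa using huv⟩ fun z => by simp

lemma IsLChoosable.of_comp_sub {M : ZMod s → Finset ℕ} (p : ZMod s)
    (h : IsLChoosable (cycleCube s) fun z => M (p - z)) : IsLChoosable (cycleCube s) M :=
  h.of_hom ⟨fun z => p - z, fun huv => by simpa [or_comm] using huv⟩ fun z => by simp

lemma cycleCube_colorable_five (hs : 9 ≤ s) (hs' : s ≠ 11) : (cycleCube s).Colorable 5 := by
  -- `s = 4 * q + 5 * (s % 4)`: colour `0, …, 4q - 1` periodically mod 4, the rest mod 5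
  set m := s - 5 * (s % 4)
  let f : ℕ → ℕ := fun j => if j < m then j % 4 else (j - m) % 5
  refine ⟨Coloring.mk (fun z => ⟨f z.val, by dsimp only [f]; split <;> omega⟩)
    fun {u v} huv heq => ?_⟩
  have : NeZero s := ⟨by omega⟩
  rw [← ZMod.natCast_zmod_val u, ← ZMod.natCast_zmod_val v,
    cycleCube_adj_natCast_iff (by omega) u.val_lt v.val_lt] at huv
  have := u.val_lt
  have := v.val_lt
  simp only [Fin.mk.injEq, f, CycNear] at heq huv
  split_ifs at heq <;> omega

lemma cycleCube_not_colorable_four (hs : 4 ≤ s) (hs4 : s % 4 ≠ 0) :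
    ¬ (cycleCube s).Colorable 4 := by
  rintro ⟨C⟩
  have hne : ∀ z : ZMod s, ∀ {i j : ℕ}, i < j → j ≤ i + 3 → C (z + i) ≠ C (z + j) :=
    fun z _ _ hij hji => C.valid (cycleCube_adj_add_natCast hs z hij hji)
  have hper : Function.Periodic C 4 := fun z => by
    have := hne z (i := 0) (j := 1); have := hne z (i := 0) (j := 2)
    have := hne z (i := 0) (j := 3); have := hne z (i := 1) (j := 2)
    have := hne z (i := 1) (j := 3); have := hne z (i := 2) (j := 3)
    have := hne z (i := 1) (j := 4); have := hne z (i := 2) (j := 4)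
    have := hne z (i := 3) (j := 4)
    simp only [Nat.cast_zero, add_zero, Nat.cast_one, Nat.cast_ofNat] at *
    omega
  have hr : (-((s / 4 : ℕ) : ℤ)) • (4 : ZMod s) = ((s % 4 : ℕ) : ZMod s) := by
    have h := congrArg (Nat.cast : ℕ → ZMod s) (Nat.div_add_mod s 4)
    rw [ZMod.natCast_self, Nat.cast_add, Nat.cast_mul, Nat.cast_ofNat] at h
    rw [zsmul_eq_mul, Int.cast_neg, Int.cast_natCast]
    linear_combination -h
  have := hper.zsmul (-((s / 4 : ℕ) : ℤ)) 0
  rw [hr] at this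
  exact hne 0 (i := 0) (j := s % 4) (by omega) (by omega) (by simpa using this.symm)

end CycleCube

lemma ZMod.forall_of_add_one {s : ℕ} [NeZero s] {P : ZMod s → Prop} {t₀ : ZMod s} (h₀ : P t₀)
    (h : ∀ t, P t → P (t + 1)) (t : ZMod s) : P t := by
  have key : ∀ n : ℕ, P (t₀ + n) := fun n => by
    induction n with
    | zero => simpa using h₀
    | succ n ih => simpa [add_assoc] using h _ ih
  simpa using key (t - t₀).val

section Seam

variable {s : ℕ} {W M : ZMod s → Finset ℕ}

def HasSpareColor (s : ℕ) (P : Finset ℕ) (c₀ : ℕ → ℕ) (X : Finset ℕ) (j : ℕ) : Prop :=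
  ∃ B K : Finset ℕ, (∀ i < s, CycNear s i j → i < j ∨ i ∈ P → i ∈ B ∨ i ∈ P ∧ c₀ i ∈ K) ∧
    #B + #(X ∩ K) < #X

/-- The index `j : ℕ` stands for the vertex `j + 1`, so that `0` is coloured last. -/
lemma cycleCube_isLChoosable_of_precoloring (hs : 3 ≤ s)
    (P : Finset ℕ) (c₀ : ℕ → ℕ) (hP : ∀ i ∈ P, i < s) (hc₀W : ∀ i ∈ P, c₀ i ∈ W (i + 1))
    (hc₀ : ∀ i ∈ P, ∀ j ∈ P, CycNear s i j → c₀ i ≠ c₀ j)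
    (hfree : ∀ j < s, j ∉ P → HasSpareColor s P c₀ (W (j + 1)) j) :
    IsLChoosable (cycleCube s) W := by
  have : NeZero s := ⟨by omega⟩
  have hadj : ∀ {i j}, i < s → j < s →
      (((cycleCube s).comap (Nat.cast : ℕ → ZMod s)).Adj i j ↔ CycNear s i j) :=
    fun hi hj => cycleCube_adj_natCast_iff hs hi hj
  obtain ⟨C, hCW, hC⟩ := exists_listColoring_of_precoloring ((cycleCube s).comap Nat.cast) s
    (fun j => W (j + 1)) P c₀ hc₀W
    (fun i hi j hj h => hc₀ i hi j hj ((hadj (hP i hi) (hP j hj)).1 h))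
    (fun j hj hjP => by
      obtain ⟨B, K, hBK, hcard⟩ := hfree j hj hjP
      exact ⟨B, K, fun i hi h => hBK i hi ((hadj hi hj).1 h), hcard⟩)
  refine ⟨fun z => C (z - 1).val, fun z => ?_, fun u v huv => ?_⟩
  · have := hCW _ (ZMod.val_lt (z - 1))
    rwa [ZMod.natCast_zmod_val, sub_add_cancel] at this
  · refine hC _ (ZMod.val_lt _) _ (ZMod.val_lt _) ?_
    simpa [comap_adj] using huv

lemma hasSpareColor_of_far {P : Finset ℕ} {c₀ : ℕ → ℕ} {X : Finset ℕ} {j : ℕ} (q : ℕ)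
    (hX : #X = 5) (hj : 3 ≤ j) (hjs : j + 4 ≤ s) (hP : ∀ i ∈ P, i ≤ 2 ∨ i = q) :
    HasSpareColor s P c₀ X j := by
  refine ⟨{j - 1, j - 2, j - 3, q}, ∅, fun i hi hnear hord => .inl ?_, ?_⟩
  · have := hord.imp_right (hP i)
    simp only [CycNear, mem_insert, mem_singleton] at *
    omega
  · rw [inter_empty, card_empty, add_zero, hX]
    exact Nat.lt_succ_of_le card_le_four

lemma natCast_sub_add_one {k : ℕ} (hk : k ≤ s) : ((s - k : ℕ) : ZMod s) + 1 = 1 - k := by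
  rw [Nat.cast_sub hk, ZMod.natCast_self]; ring

/-! The plans colour `0` last and precolour `1, 2, 3` with `a, b, c`, leaving enough colours
free for `-2, -1, 0`; plan `C` also gives `-2` the colour `b`, plan `F` gives `-1` a colour
`d`. -/

def PlanA (W : ZMod s → Finset ℕ) : Prop :=
  ∃ a ∈ W 1, ∃ b ∈ W 2, ∃ c ∈ W 3, a ≠ b ∧ a ≠ c ∧ b ≠ c ∧
    #(W (-1) ∩ {a, b}) ≤ 1 ∧ #(W 0 ∩ {a, b, c}) ≤ 1

def PlanC (W : ZMod s → Finset ℕ) : Prop :=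
  ∃ a ∈ W 1, ∃ b ∈ W 2 ∩ W (-2), ∃ c ∈ W 3, a ≠ b ∧ a ≠ c ∧ b ≠ c ∧
    #(W 0 ∩ {a, b, c}) ≤ 2

def PlanF (W : ZMod s → Finset ℕ) : Prop :=
  ∃ a ∈ W 1, ∃ b ∈ W 2, ∃ c ∈ W 3, ∃ d ∈ W (-1), a ≠ b ∧ a ≠ c ∧ b ≠ c ∧ d ≠ a ∧ d ≠ b ∧
    #(W (-2) ∩ {a, d}) ≤ 1 ∧ #(W 0 ∩ {a, b, c, d}) ≤ 2

lemma PlanA.isLChoosable (hs : 9 ≤ s) (hW : ∀ z, #(W z) = 5) (h : PlanA W) :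
    IsLChoosable (cycleCube s) W := by
  obtain ⟨a, ha, b, hb, c, hc, hab, hac, hbc, hm1, h0⟩ := h
  refine cycleCube_isLChoosable_of_precoloring (by omega) {0, 1, 2}
    (fun i => if i = 0 then a else if i = 1 then b else c) (by simp; omega) ?_ ?_ ?_
  · simp only [mem_insert, mem_singleton]
    rintro i (rfl | rfl | rfl) <;> norm_num [ha, hb, hc]
  · simp only [mem_insert, mem_singleton]
    rintro i (rfl | rfl | rfl) j (rfl | rfl | rfl) <;>
      simp [CycNear, hab, hac, hbc, hab.symm, hac.symm, hbc.symm]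
  intro j hj hjP
  simp only [mem_insert, mem_singleton, not_or] at hjP
  rcases (by omega : j + 4 ≤ s ∨ j = s - 3 ∨ j = s - 2 ∨ j = s - 1) with hfar | rfl | rfl | rfl
  · exact hasSpareColor_of_far 0 (hW _) (by omega) hfar (by simp)
  · refine ⟨{s - 4, s - 5, s - 6, 0}, ∅, fun i hi hnear hord => .inl ?_, ?_⟩
    · simp only [CycNear, mem_insert, mem_singleton] at *; omega
    · rw [inter_empty, card_empty, add_zero, hW]; exact Nat.lt_succ_of_le card_le_four
  · refine ⟨{s - 3, s - 4, s - 5}, {a, b}, fun i hi hnear hord => ?_, ?_⟩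
    · simp only [CycNear, mem_insert, mem_singleton] at *
      rcases (by omega : (i = s - 3 ∨ i = s - 4 ∨ i = s - 5) ∨ i = 0 ∨ i = 1) with h | rfl | rfl
      · omega
      all_goals simp
    · rw [natCast_sub_add_one (by omega), hW]
      norm_num at hm1 ⊢
      have := card_le_three (a := s - 3) (b := s - 4) (c := s - 5)
      omega
  · refine ⟨{s - 2, s - 3, s - 4}, {a, b, c}, fun i hi hnear hord => ?_, ?_⟩
    · simp only [CycNear, mem_insert, mem_singleton] at *
      rcases (by omega : (i = s - 2 ∨ i = s - 3 ∨ i = s - 4) ∨ i = 0 ∨ i = 1 ∨ i = 2)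
        with h | rfl | rfl | rfl
      · omega
      all_goals simp
    · rw [natCast_sub_add_one (by omega), hW]
      norm_num at h0 ⊢
      have := card_le_three (a := s - 2) (b := s - 3) (c := s - 4)
      omega

lemma PlanC.isLChoosable (hs : 9 ≤ s) (hW : ∀ z, #(W z) = 5) (h : PlanC W) :
    IsLChoosable (cycleCube s) W := by
  obtain ⟨a, ha, b, hb, c, hc, hab, hac, hbc, h0⟩ := h
  rw [mem_inter] at hb
  have hq : s - 3 ≠ 0 ∧ s - 3 ≠ 1 ∧ s - 3 ≠ 2 := by omega
  refine cycleCube_isLChoosable_of_precoloring (by omega) {0, 1, 2, s - 3}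
    (fun i => if i = 0 then a else if i = 1 then b else if i = 2 then c else b)
    (by simp; omega) ?_ ?_ ?_
  · simp only [mem_insert, mem_singleton]
    rintro i (rfl | rfl | rfl | rfl) <;> norm_num [hq, ha, hb.1, hc,
      natCast_sub_add_one (by omega : 3 ≤ s), show (1 : ZMod s) - 3 = -2 by ring, hb.2]
  · simp only [mem_insert, mem_singleton]
    rintro i (rfl | rfl | rfl | rfl) j (rfl | rfl | rfl | rfl) <;>
      simp [CycNear, hq, hab, hac, hbc, hab.symm, hac.symm, hbc.symm] <;> omega
  intro j hj hjP
  simp only [mem_insert, mem_singleton, not_or] at hjP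
  rcases (by omega : j + 4 ≤ s ∨ j = s - 2 ∨ j = s - 1) with hfar | rfl | rfl
  · exact hasSpareColor_of_far (s - 3) (hW _) (by omega) hfar (by simp)
  · refine ⟨{s - 4, s - 5}, {a, b}, fun i hi hnear hord => ?_, ?_⟩
    · simp only [CycNear, mem_insert, mem_singleton] at *
      rcases (by omega : (i = s - 4 ∨ i = s - 5) ∨ i = 0 ∨ i = 1 ∨ i = s - 3)
        with h | rfl | rfl | rfl
      · omega
      all_goals simp [hq]
    · have := (card_le_card (inter_subset_right (s₁ := W (↑(s - 2) + 1)) (s₂ := {a, b}))).trans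
        card_le_two
      rw [hW]; have := card_le_two (a := s - 4) (b := s - 5); omega
  · refine ⟨{s - 2, s - 4}, {a, b, c}, fun i hi hnear hord => ?_, ?_⟩
    · simp only [CycNear, mem_insert, mem_singleton] at *
      rcases (by omega : (i = s - 2 ∨ i = s - 4) ∨ i = 0 ∨ i = 1 ∨ i = 2 ∨ i = s - 3)
        with h | rfl | rfl | rfl | rfl
      · omega
      all_goals simp [hq]
    · rw [natCast_sub_add_one (by omega), hW]
      norm_num at h0 ⊢
      have := card_le_two (a := s - 2) (b := s - 4)
      omega

lemma PlanF.isLChoosable (hs : 9 ≤ s) (hW : ∀ z, #(W z) = 5) (h : PlanF W) :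
    IsLChoosable (cycleCube s) W := by
  obtain ⟨a, ha, b, hb, c, hc, d, hd, hab, hac, hbc, hda, hdb, hm2, h0⟩ := h
  have hq : s - 2 ≠ 0 ∧ s - 2 ≠ 1 ∧ s - 2 ≠ 2 := by omega
  refine cycleCube_isLChoosable_of_precoloring (by omega) {0, 1, 2, s - 2}
    (fun i => if i = 0 then a else if i = 1 then b else if i = 2 then c else d)
    (by simp; omega) ?_ ?_ ?_
  · simp only [mem_insert, mem_singleton]
    rintro i (rfl | rfl | rfl | rfl) <;> norm_num [hq, ha, hb, hc,
      natCast_sub_add_one (by omega : 2 ≤ s), show (1 : ZMod s) - 2 = -1 by ring, hd]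
  · simp only [mem_insert, mem_singleton]
    rintro i (rfl | rfl | rfl | rfl) j (rfl | rfl | rfl | rfl) <;>
      simp [CycNear, hq, hab, hac, hbc, hda, hdb, hab.symm, hac.symm, hbc.symm, hda.symm,
        hdb.symm] <;> omega
  intro j hj hjP
  simp only [mem_insert, mem_singleton, not_or] at hjP
  rcases (by omega : j + 4 ≤ s ∨ j = s - 3 ∨ j = s - 1) with hfar | rfl | rfl
  · exact hasSpareColor_of_far (s - 2) (hW _) (by omega) hfar (by simp)
  · refine ⟨{s - 4, s - 5, s - 6}, {a, d}, fun i hi hnear hord => ?_, ?_⟩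
    · simp only [CycNear, mem_insert, mem_singleton] at *
      rcases (by omega : (i = s - 4 ∨ i = s - 5 ∨ i = s - 6) ∨ i = 0 ∨ i = s - 2)
        with h | rfl | rfl
      · omega
      all_goals simp [hq]
    · rw [natCast_sub_add_one (by omega), hW]
      norm_num at hm2 ⊢
      have := card_le_three (a := s - 4) (b := s - 5) (c := s - 6)
      omega
  · refine ⟨{s - 3, s - 4}, {a, b, c, d}, fun i hi hnear hord => ?_, ?_⟩
    · simp only [CycNear, mem_insert, mem_singleton] at *
      rcases (by omega : (i = s - 3 ∨ i = s - 4) ∨ i = 0 ∨ i = 1 ∨ i = 2 ∨ i = s - 2)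
        with h | rfl | rfl | rfl | rfl
      · omega
      all_goals simp [hq]
    · rw [natCast_sub_add_one (by omega), hW]
      norm_num at h0 ⊢
      have := card_le_two (a := s - 3) (b := s - 4)
      omega

lemma exists_mem_ne_three {X : Finset ℕ} (hX : 3 < #X) (a b c : ℕ) :
    ∃ x ∈ X, x ≠ a ∧ x ≠ b ∧ x ≠ c := by
  obtain ⟨x, hx, hxabc⟩ := exists_mem_notMem_of_card_lt_card (s := {a, b, c})
    (card_le_three.trans_lt hX)
  exact ⟨x, hx, by simpa using hxabc⟩

lemma card_inter_pair_le_one {Y : Finset ℕ} {a b : ℕ} (h : ¬(a ∈ Y ∧ b ∈ Y)) :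
    #(Y ∩ {a, b}) ≤ 1 :=
  card_le_one.2 fun x hx y hy => by simp only [mem_inter, mem_insert, mem_singleton] at hx hy; grind

lemma mem_of_not_planA (hA : ¬PlanA W) (h : W (-1) = W 0) {a b c : ℕ} (ha : a ∈ W 1)
    (hb : b ∈ W 2) (hc : c ∈ W 3) (hab : a ≠ b) (hac : a ≠ c) (hbc : b ≠ c) (hc0 : c ∉ W 0) :
    a ∈ W 0 ∧ b ∈ W 0 := by
  by_contra hn
  have h1 := card_inter_pair_le_one hn
  refine hA ⟨a, ha, b, hb, c, hc, hab, hac, hbc, h ▸ h1, le_trans (card_le_card ?_) h1⟩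
  intro x
  simp only [mem_inter, mem_insert, mem_singleton]
  grind

lemma subset_of_not_planC (hW : ∀ z, #(W z) = 5) (hC : ¬PlanC W) {y : ℕ}
    (hy : y ∈ W 2 ∩ W (-2)) : W 1 ⊆ W 0 ∧ W 3 ⊆ W 0 := by
  have key : ∀ a ∈ W 1, ∀ c ∈ W 3, a ≠ y → a ≠ c → y ≠ c → {a, y, c} ⊆ W 0 :=
    fun a ha c hc hay hac hyc => inter_eq_right.1 <| eq_of_subset_of_card_le inter_subset_right <|
      card_le_three.trans (not_le.1 fun h => hC ⟨a, ha, y, hy, c, hc, hay, hac, hyc, h⟩)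
  have h3 : ∀ z, 3 < #(W z) := fun z => by rw [hW]; norm_num
  have hy0 : y ∈ W 0 := by
    obtain ⟨a, ha, hay, -⟩ := exists_mem_ne_three (h3 1) y y y
    obtain ⟨c, hc, hca, hcy, -⟩ := exists_mem_ne_three (h3 3) a y y
    exact key a ha c hc hay hca.symm hcy.symm (by simp)
  refine ⟨fun a ha => ?_, fun c hc => ?_⟩
  · rcases eq_or_ne a y with rfl | hay
    · exact hy0
    obtain ⟨c, hc, hca, hcy, -⟩ := exists_mem_ne_three (h3 3) a y y
    exact key a ha c hc hay hca.symm hcy.symm (by simp)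
  · rcases eq_or_ne c y with rfl | hcy
    · exact hy0
    obtain ⟨a, ha, hac, hay, -⟩ := exists_mem_ne_three (h3 1) c y y
    exact key a ha c hc hay hac hcy.symm (by simp)

lemma mem_of_not_planF (hW : ∀ z, #(W z) = 5) (hF : ¬PlanF W) {a c d : ℕ} (ha : a ∈ W 1)
    (hc : c ∈ W 3) (hd : d ∈ W (-1)) (hca : c ≠ a) (hda : d ≠ a) (ha0 : a ∉ W 0)
    (hcd0 : c ∉ W 0 ∨ d ∉ W 0) : a ∈ W (-2) ∧ d ∈ W (-2) := by
  obtain ⟨b, hb, hba, hbc, hbd⟩ := exists_mem_ne_three (by rw [hW 2]; norm_num) a c d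
  by_contra hn
  refine hF ⟨a, ha, b, hb, c, hc, d, hd, hba.symm, hca.symm, hbc, hda, hbd.symm,
    card_inter_pair_le_one hn, ?_⟩
  -- only `b` and one of `c`, `d` can lie in `W 0`
  obtain ⟨e, he⟩ : ∃ e, W 0 ∩ {a, b, c, d} ⊆ {b, e} := by
    rcases hcd0 with h0 | h0
    · exact ⟨d, fun x => by simp only [mem_inter, mem_insert, mem_singleton]; grind⟩
    · exact ⟨c, fun x => by simp only [mem_inter, mem_insert, mem_singleton]; grind⟩
  exact (card_le_card he).trans card_le_two

structure SeamBlocked (M : ZMod s → Finset ℕ) : Prop where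
  card_eq : ∀ z, #(M z) = 5
  disjoint : ∀ r, Disjoint (M r) (M (r + 4))
  not_planA : ¬PlanA M
  not_planA_neg : ¬PlanA fun z => M (-z)
  not_planF : ¬PlanF M
  not_planF_neg : ¬PlanF fun z => M (-z)

namespace SeamBlocked

lemma three_lt_card (h : SeamBlocked M) (z : ZMod s) : 3 < #(M z) := by rw [h.card_eq]; norm_num

lemma neg (h : SeamBlocked M) : SeamBlocked fun z => M (-z) where
  card_eq z := h.card_eq (-z)
  disjoint r := by convert (h.disjoint (-r - 4)).symm using 2 <;> ring
  not_planA := h.not_planA_neg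
  not_planA_neg := by simpa using h.not_planA
  not_planF := h.not_planF_neg
  not_planF_neg := by simpa using h.not_planF

lemma notMem_of_mem_add_four (h : SeamBlocked M) {r : ZMod s} {x : ℕ} (hx : x ∈ M r) :
    x ∉ M (r + 4) :=
  disjoint_left.1 (h.disjoint r) hx

lemma eq_of_notMem_zero (h : SeamBlocked M) {u v : ℕ} (hu : u ∈ M 1) (hu0 : u ∉ M 0)
    (hv : v ∈ M (-1)) (hv0 : v ∉ M 0) : u = v := by
  by_contra huv
  obtain ⟨c, hc, hcu, -⟩ := exists_mem_ne_three (h.three_lt_card 3) u u u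
  obtain ⟨c', hc', hc'v, -⟩ := exists_mem_ne_three (h.three_lt_card (-3)) v v v
  have hu2 := (mem_of_not_planF h.card_eq h.not_planF hu hc hv hcu (Ne.symm huv) hu0
    (.inr hv0)).1
  have hu2' := (mem_of_not_planF h.neg.card_eq h.neg.not_planF hv hc' (by simpa using hu)
    hc'v huv (by simpa using hv0) (.inr (by simpa using hu0))).2
  exact h.notMem_of_mem_add_four hu2 (by simpa [show (-2 : ZMod s) + 4 = 2 by ring] using hu2')

lemma not_subset (h : SeamBlocked M) : ¬ M 1 ⊆ M 0 := by
  intro hsub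
  have h10 : M 1 = M 0 := eq_of_subset_of_card_le hsub (by rw [h.card_eq, h.card_eq])
  have key : ∀ a ∈ M (-1), ∀ b ∈ M (-2), a ≠ b → a ∈ M 0 ∧ b ∈ M 0 := fun a ha b hb hab => by
    obtain ⟨c, hc, hca, hcb, -⟩ := exists_mem_ne_three (h.three_lt_card (-3)) a b b
    have hc0 : c ∉ M 0 := by
      simpa [show (-3 : ZMod s) + 4 = 1 by ring, h10] using h.notMem_of_mem_add_four hc
    simpa using mem_of_not_planA h.not_planA_neg (by simp [h10]) ha hb hc hab hca.symm hcb.symm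
      (by simpa using hc0)
  have hm1 : M (-1) = M 0 := eq_of_subset_of_card_le (fun a ha => by
    obtain ⟨b, hb, hba, -⟩ := exists_mem_ne_three (h.three_lt_card (-2)) a a a
    exact (key a ha b hb hba.symm).1) (by rw [h.card_eq, h.card_eq])
  have hm2 : M (-2) = M 0 := eq_of_subset_of_card_le (fun b hb => by
    obtain ⟨a, ha, hab, -⟩ := exists_mem_ne_three (h.three_lt_card (-1)) b b b
    exact (key a ha b hb hab).2) (by rw [h.card_eq, h.card_eq])
  obtain ⟨a, ha, -⟩ := exists_mem_ne_three (h.three_lt_card 1) 0 0 0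
  obtain ⟨b, hb, hba, -⟩ := exists_mem_ne_three (h.three_lt_card 2) a a a
  obtain ⟨c, hc, hca, hcb, -⟩ := exists_mem_ne_three (h.three_lt_card 3) a b b
  have hb0 : b ∉ M 0 := fun hb0 => h.notMem_of_mem_add_four (hm2 ▸ hb0)
    (by rwa [show (-2 : ZMod s) + 4 = 2 by ring])
  have hc0 : c ∉ M 0 := fun hc0 => h.notMem_of_mem_add_four (hm1 ▸ hc0)
    (by rwa [show (-1 : ZMod s) + 4 = 3 by ring])
  exact hb0 (mem_of_not_planA h.not_planA hm1 ha hb hc hba.symm hca.symm hcb.symm hc0).2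

lemma exists_mem_three_notMem_zero (h : SeamBlocked M) {x : ℕ} (hx1 : x ∈ M 1)
    (hx0 : x ∉ M 0) : ∃ c ∈ M 3, c ∉ M 0 := by
  by_contra! hsub
  obtain ⟨y, hy, hyx, -⟩ := exists_mem_ne_three (h.three_lt_card (-1)) x x x
  have hy0 : y ∈ M 0 := by
    by_contra hy0
    exact hyx (h.eq_of_notMem_zero hx1 hx0 hy hy0).symm
  have h30 : M 3 = M 0 := eq_of_subset_of_card_le hsub (by rw [h.card_eq, h.card_eq])
  exact h.notMem_of_mem_add_four hy (by rwa [show (-1 : ZMod s) + 4 = 3 by ring, h30])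

theorem false (h : SeamBlocked M) : False := by
  obtain ⟨x, hx1, hx0⟩ := Finset.not_subset.1 h.not_subset
  obtain ⟨v, hv, hv0⟩ := Finset.not_subset.1 h.neg.not_subset
  obtain rfl := h.eq_of_notMem_zero hx1 hx0 hv (by simpa using hv0)
  obtain ⟨c, hc, hc0⟩ := h.exists_mem_three_notMem_zero hx1 hx0
  obtain ⟨c', hc', hc'0⟩ := h.neg.exists_mem_three_notMem_zero hv hv0
  obtain ⟨d, hd, hdx, -⟩ := exists_mem_ne_three (h.three_lt_card (-1)) x x x
  obtain ⟨d', hd', hd'x, -⟩ := exists_mem_ne_three (h.three_lt_card 1) x x x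
  have hcx : c ≠ x := by
    rintro rfl
    exact h.notMem_of_mem_add_four hv (by rwa [show (-1 : ZMod s) + 4 = 3 by ring])
  have hc'x : c' ≠ x := by
    rintro rfl
    exact h.notMem_of_mem_add_four hc' (by rwa [show (-3 : ZMod s) + 4 = 1 by ring])
  have hx2 := (mem_of_not_planF h.card_eq h.not_planF hx1 hc hd hcx hdx hx0 (.inl hc0)).1
  have hx2' := (mem_of_not_planF h.neg.card_eq h.neg.not_planF hv hc' (by simpa using hd')
    hc'x hd'x hv0 (.inl hc'0)).1
  exact h.notMem_of_mem_add_four hx2 (by simpa [show (-2 : ZMod s) + 4 = 2 by ring] using hx2')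

end SeamBlocked

/-- A colour shared by `M t` and `M (t + 4)` serves as `b` for plan `C` at `t + 2` in both
directions. -/
lemma eq_and_not_disjoint_succ_of_not_planC (hM : ∀ z, #(M z) = 5)
    (hC : ∀ p, ¬PlanC (fun z => M (p + z)) ∧ ¬PlanC (fun z => M (p - z))) {t : ZMod s}
    (ht : ¬Disjoint (M t) (M (t + 4))) :
    M (t + 1) = M (t + 2) ∧ ¬Disjoint (M (t + 1)) (M (t + 1 + 4)) := by
  obtain ⟨y, hyt, hy4⟩ := not_disjoint_iff.1 ht
  have hfwd := subset_of_not_planC (W := fun z => M (t + 2 + z)) (fun _ => hM _) (hC _).1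
    (y := y) (by simpa [show t + 2 + 2 = t + 4 by ring, ← sub_eq_add_neg] using ⟨hy4, hyt⟩)
  have hbwd := subset_of_not_planC (W := fun z => M (t + 2 - z)) (fun _ => hM _) (hC _).2
    (y := y) (by simpa [show t + 2 + 2 = t + 4 by ring] using ⟨hyt, hy4⟩)
  have h1 : M (t + 1) = M (t + 2) := eq_of_subset_of_card_le
    (by simpa [show t + 2 - 1 = t + 1 by ring] using hbwd.1) (by rw [hM, hM])
  have h5 : M (t + 1 + 4) = M (t + 2) := eq_of_subset_of_card_le
    (by simpa [show t + 2 + 3 = t + 1 + 4 by ring] using hfwd.2) (by rw [hM, hM])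
  refine ⟨h1, ?_⟩
  rw [h1, h5, disjoint_self_iff_empty, ← card_eq_zero, hM]
  norm_num

lemma isLChoosable_of_plan (hs : 9 ≤ s) (hM : ∀ z, #(M z) = 5)
    (h : PlanA M ∨ PlanC M ∨ PlanF M) : IsLChoosable (cycleCube s) M := by
  rcases h with h | h | h
  exacts [h.isLChoosable hs hM, h.isLChoosable hs hM, h.isLChoosable hs hM]

theorem cycleCube_choosable_five (hs : 9 ≤ s) (hs' : s ≠ 11) : Choosable (cycleCube s) 5 := by
  have : NeZero s := ⟨by omega⟩
  refine Choosable.of_forall_card_eq fun M hM => ?_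
  by_contra hL
  have hfwd : ∀ p, ¬(PlanA (fun z => M (p + z)) ∨ PlanC (fun z => M (p + z)) ∨
      PlanF (fun z => M (p + z))) :=
    fun p h => hL ((isLChoosable_of_plan hs (fun _ => hM _) h).of_comp_add p)
  have hbwd : ∀ p, ¬(PlanA (fun z => M (p - z)) ∨ PlanC (fun z => M (p - z)) ∨
      PlanF (fun z => M (p - z))) :=
    fun p h => hL ((isLChoosable_of_plan hs (fun _ => hM _) h).of_comp_sub p)
  by_cases hD : ∀ r, Disjoint (M r) (M (r + 4))
  · refine SeamBlocked.false (M := M) ⟨hM, hD, ?_, ?_, ?_, ?_⟩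
    · exact fun h => hfwd 0 (.inl (by simpa using h))
    · exact fun h => hbwd 0 (.inl (by simpa using h))
    · exact fun h => hfwd 0 (.inr (.inr (by simpa using h)))
    · exact fun h => hbwd 0 (.inr (.inr (by simpa using h)))
  push Not at hD
  obtain ⟨t, ht⟩ := hD
  have hC : ∀ p, ¬PlanC (fun z => M (p + z)) ∧ ¬PlanC (fun z => M (p - z)) :=
    fun p => ⟨fun h => hfwd p (.inr (.inl h)), fun h => hbwd p (.inr (.inl h))⟩
  have hall : ∀ r, ¬Disjoint (M r) (M (r + 4)) :=
    ZMod.forall_of_add_one ht fun r hr => (eq_and_not_disjoint_succ_of_not_planC hM hC hr).2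
  have hconst : ∀ z, M z = M 0 := ZMod.forall_of_add_one (P := fun z => M z = M 0) rfl
    fun r hr => by
      have h := (eq_and_not_disjoint_succ_of_not_planC hM hC (hall (r - 1))).1
      rwa [sub_add_cancel, show r - 1 + 2 = r + 1 by ring, hr, eq_comm] at h
  apply hL
  rw [funext hconst]
  exact (cycleCube_colorable_five hs hs').isLChoosable_const (hM 0).ge

end Seam

/-- For every `s ≥ 9` with `s ≠ 11` and `s ≢ 0 (mod 4)`, the graph
`T(1,s,2)` has chromatic number `5`, is `5`-choosable and is not `4`-choosable; hence its
choice number (the least `k` for which it is `k`-choosable) equals its chromatic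
number, both being `5`. -/
theorem T_one_s_two_chromatic_choosable (s : ℕ) (hs : 9 ≤ s) (hs' : s ≠ 11)
    (hs4 : s % 4 ≠ 0) :
    (T 1 s 2).chromaticNumber = 5 ∧
    Choosable (T 1 s 2) 5 ∧
    ¬ Choosable (T 1 s 2) 4 ∧
    IsLeast {k : ℕ | Choosable (T 1 s 2) k} 5 := by
  let toCube : T 1 s 2 →g cycleCube s := ⟨Prod.snd, T_one_two_adj_iff.1⟩
  let ofCube : cycleCube s →g T 1 s 2 := ⟨fun z => (0, z), fun h => T_one_two_adj_iff.2 h⟩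
  have h5 : Choosable (T 1 s 2) 5 := fun L hL =>
    (cycleCube_choosable_five hs hs' (fun z => L (0, z)) fun _ => hL _).of_hom toCube fun v =>
      (congrArg L (Prod.ext (Subsingleton.elim 0 v.1) rfl : ((0 : ZMod 1), v.2) = v)).subset
  have h4 : ¬(T 1 s 2).Colorable 4 :=
    fun h => cycleCube_not_colorable_four (by omega) hs4 (h.of_hom ofCube)
  have hmin : ∀ k, Choosable (T 1 s 2) k → 5 ≤ k := fun k hk => by
    by_contra! hk5
    exact h4 (hk.colorable.mono (by omega))
  exact ⟨chromaticNumber_eq_iff_colorable_not_colorable.2 ⟨h5.colorable, h4⟩, h5,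
    fun h => absurd (hmin 4 h) (by norm_num), h5, hmin⟩
end

section
/- Let G be a finite simple graph equipped with an orientation, i.e., a relation → on the vertices such that two vertices u, v are adjacent in G if and only if exactly one of u → v, v → u holds. Suppose the resulting digraph contains no directed cycle of odd length. If L is a list assignment such that |L(v)| ≥ outdeg(v) + 1 for every vertex v, where outdeg(v) is the number of vertices w with v → w, then G is L-choosable. -/
/-- The digraph given by the relation `D` has a directed cycle of odd length: there are
pairwise distinct vertices `v₁, …, v_k` (`k ≥ 2`, `k` odd) with
`v₁ → v₂ → ⋯ → v_k → v₁`. -/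
def HasOddDirectedCycle {V : Type*} (D : V → V → Prop) : Prop :=
  ∃ (k : ℕ) (f : Fin (k + 1) → V), 1 ≤ k ∧ Odd (k + 1) ∧ Function.Injective f ∧
    ∀ i : Fin (k + 1), D (f i) (f (i + 1))

section

variable {V : Type*} {R : V → V → Prop}

theorem HasOddDirectedCycle.mono {S : V → V → Prop} (hRS : ∀ u w, R u w → S u w) (h : HasOddDirectedCycle R) :
    HasOddDirectedCycle S :=
  let ⟨k, f, hk, hodd, hinj, hf⟩ := h
  ⟨k, f, hk, hodd, hinj, fun i => hRS _ _ (hf i)⟩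

theorem exists_periodic_walk_of_eq {p : ℕ → V} {a b : ℕ} (hab : a < b)
    (hp : ∀ i, a ≤ i → i < b → R (p i) (p (i + 1))) (heq : p a = p b) :
    ∃ q : ℕ → V, (∀ i, R (q i) (q (i + 1))) ∧ Function.Periodic q (b - a) := by
  refine ⟨fun i => p (a + i % (b - a)), fun i => ?_, fun i => by simp⟩
  have hr : i % (b - a) < b - a := Nat.mod_lt _ (by omega)
  have hstep := hp (a + i % (b - a)) (by omega) (by omega)
  have hsucc : (i + 1) % (b - a) = (i % (b - a) + 1) % (b - a) :=
    Nat.add_mod_eq_add_mod_right 1 (Nat.mod_mod i _).symm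
  rcases Nat.lt_or_ge (i % (b - a) + 1) (b - a) with hlt | hge
  · simpa only [hsucc, Nat.mod_eq_of_lt hlt, ← add_assoc] using hstep
  · have hwrap : i % (b - a) + 1 = b - a := by omega
    simp only [hsucc, hwrap, Nat.mod_self, add_zero, heq]
    rwa [add_assoc, hwrap, Nat.add_sub_cancel' hab.le] at hstep

theorem hasOddDirectedCycle_of_periodic (hirr : ∀ v, ¬ R v v) {m : ℕ} (hm : Odd m)
    {p : ℕ → V} (hp : ∀ i, R (p i) (p (i + 1))) (hper : Function.Periodic p m) :
    HasOddDirectedCycle R := by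
  induction m using Nat.strong_induction_on generalizing p with
  | _ m ih =>
  by_cases hinj : ∀ a b, a < b → b < m → p a ≠ p b
  · obtain ⟨k, rfl⟩ : ∃ k, m = k + 1 := ⟨m - 1, by obtain ⟨t, ht⟩ := hm; omega⟩
    have hk : 1 ≤ k := by
      by_contra! hk0
      obtain rfl : k = 0 := by omega
      exact hirr _ (hper 0 ▸ hp 0)
    refine ⟨k, fun i => p i, hk, hm, fun i j hij => ?_, fun i => ?_⟩
    · by_contra hne
      rcases Nat.lt_or_gt_of_ne (Fin.val_ne_of_ne hne) with h | h
      · exact hinj _ _ h j.2 hij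
      · exact hinj _ _ h i.2 hij.symm
    · simpa [Fin.val_add, hper.map_mod_nat] using hp i
  · push Not at hinj
    obtain ⟨a, b, hab, hbm, heq⟩ := hinj
    obtain ⟨q₁, hq₁, hper₁⟩ := exists_periodic_walk_of_eq hab (fun i _ _ => hp i) heq
    obtain ⟨q₂, hq₂, hper₂⟩ := exists_periodic_walk_of_eq (a := b) (b := a + m) (by omega)
      (fun i _ _ => hp i) (heq.symm.trans (hper a).symm)
    rcases Nat.even_or_odd (b - a) with he | ho
    · refine ih (a + m - b) (by omega) ?_ hq₂ hper₂
      rw [Nat.odd_iff] at hm ⊢; rw [Nat.even_iff] at he; omega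
    · exact ih (b - a) (by omega) ho hq₁ hper₁

inductive RelWalk (R : V → V → Prop) : ℕ → V → V → Prop
  | nil (v : V) : RelWalk R 0 v v
  | cons {u v w : V} {n : ℕ} : R u v → RelWalk R n v w → RelWalk R (n + 1) u w

namespace RelWalk

theorem single {u w : V} (h : R u w) : RelWalk R 1 u w :=
  cons h (nil w)

theorem trans {m n : ℕ} {u v w : V} (h₁ : RelWalk R m u v) (h₂ : RelWalk R n v w) :
    RelWalk R (m + n) u w := by
  induction h₁ with
  | nil => simpa using h₂
  | cons huv _ ih => simpa only [Nat.add_right_comm] using cons huv (ih h₂)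

theorem exists_seq {n : ℕ} {u w : V} (h : RelWalk R n u w) :
    ∃ p : ℕ → V, p 0 = u ∧ p n = w ∧ ∀ i < n, R (p i) (p (i + 1)) := by
  induction h with
  | nil v => exact ⟨fun _ => v, rfl, rfl, by simp⟩
  | @cons u _ _ _ huv _ ih =>
    obtain ⟨p, hp0, hpn, hp⟩ := ih
    refine ⟨fun i => if i = 0 then u else p (i - 1), rfl, by simpa using hpn, fun i hi => ?_⟩
    rcases i with _ | i
    · simpa [hp0] using huv
    · simpa using hp i (by omega)

theorem even_of_not_hasOddDirectedCycle (hirr : ∀ v, ¬ R v v) (hR : ¬ HasOddDirectedCycle R)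
    {n : ℕ} {u : V} (h : RelWalk R n u u) : Even n := by
  rcases Nat.even_or_odd n with he | ho
  · exact he
  obtain ⟨p, hp0, hpn, hp⟩ := h.exists_seq
  obtain ⟨q, hq, hper⟩ := exists_periodic_walk_of_eq (a := 0) (b := n) ho.pos
    (fun i _ hi => hp i hi) (hp0.trans hpn.symm)
  exact absurd (hasOddDirectedCycle_of_periodic hirr (by simpa using ho) hq hper) hR

end RelWalk

structure IsKernel (R : V → V → Prop) (s K : Finset V) : Prop where
  subset : K ⊆ s
  independent : ∀ u ∈ K, ∀ w ∈ K, ¬ R u w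
  absorbing : ∀ w ∈ s, w ∉ K → ∃ u ∈ K, R w u

structure IsSemikernel (R : V → V → Prop) (s S : Finset V) : Prop where
  subset : S ⊆ s
  independent : ∀ u ∈ S, ∀ w ∈ S, ¬ R u w
  absorbs_out_neighbors : ∀ u ∈ S, ∀ w ∈ s, R u w → ∃ x ∈ S, R w x

theorem exists_isKernel_of_forall_exists_isSemikernel
    (h : ∀ s : Finset V, s.Nonempty → ∃ S, S.Nonempty ∧ IsSemikernel R s S) (s : Finset V) :
    ∃ K, IsKernel R s K := by
  classical
  induction s using Finset.strongInduction with
  | H s ih =>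
  rcases s.eq_empty_or_nonempty with rfl | hs
  · exact ⟨∅, ⟨subset_rfl, by simp, by simp⟩⟩
  obtain ⟨S, ⟨x, hx⟩, hS⟩ := h s hs
  set T := s.filter fun w => w ∉ S ∧ ∀ u ∈ S, ¬ R w u
  have hTs : T ⊂ s :=
    Finset.ssubset_iff_of_subset (Finset.filter_subset _ _) |>.mpr
      ⟨x, hS.subset hx, fun hxT => (Finset.mem_filter.mp hxT).2.1 hx⟩
  obtain ⟨K, hK⟩ := ih T hTs
  have hmemT {w} (hw : w ∈ K) : w ∈ s ∧ w ∉ S ∧ ∀ u ∈ S, ¬ R w u :=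
    Finset.mem_filter.mp (hK.subset hw)
  refine ⟨S ∪ K, ⟨Finset.union_subset hS.subset (hK.subset.trans hTs.subset), ?_, ?_⟩⟩
  · simp only [Finset.mem_union]
    rintro u (huS | huK) w (hwS | hwK) huw
    · exact hS.independent u huS w hwS huw
    · obtain ⟨y, hyS, hwy⟩ := hS.absorbs_out_neighbors u huS w (hmemT hwK).1 huw
      exact (hmemT hwK).2.2 y hyS hwy
    · exact (hmemT huK).2.2 w hwS huw
    · exact hK.independent u huK w hwK huw
  · intro w hws hwK
    simp only [Finset.mem_union, not_or] at hwK
    by_cases hwT : w ∈ T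
    · obtain ⟨u, hu, hwu⟩ := hK.absorbing w hwT hwK.2
      exact ⟨u, Finset.mem_union_right _ hu, hwu⟩
    · obtain ⟨u, hu, hwu⟩ : ∃ u ∈ S, R w u := by
        by_contra! hfree
        exact hwT (Finset.mem_filter.mpr ⟨hws, hwK.1, hfree⟩)
      exact ⟨u, Finset.mem_union_left _ hu, hwu⟩

theorem exists_isSemikernel_of_not_hasOddDirectedCycle (hirr : ∀ v, ¬ R v v)
    (hR : ¬ HasOddDirectedCycle R) {s : Finset V} (hs : s.Nonempty) :
    ∃ S, S.Nonempty ∧ IsSemikernel R s S := by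
  classical
  set Rs : V → V → Prop := fun u w => R u w ∧ w ∈ s
  have heven {n u} : RelWalk Rs n u u → Even n :=
    RelWalk.even_of_not_hasOddDirectedCycle (fun v h => hirr v h.1)
      (fun h => hR (h.mono fun _ _ h => h.1))
  set reach : V → Finset V := fun u => s.filter fun w => ∃ n, RelWalk Rs n u w
  obtain ⟨v, hvs, hvmin⟩ := s.exists_min_image (fun u => (reach u).card) hs
  have hback {n w} (hvw : RelWalk Rs n v w) (hws : w ∈ s) : ∃ ℓ, RelWalk Rs ℓ w v := by
    have hsub : reach w ⊆ reach v := fun x hx => by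
      obtain ⟨hxs, m, hwx⟩ := Finset.mem_filter.mp hx
      exact Finset.mem_filter.mpr ⟨hxs, n + m, hvw.trans hwx⟩
    have hv : v ∈ reach v := Finset.mem_filter.mpr ⟨hvs, 0, .nil v⟩
    rw [← Finset.eq_of_subset_of_card_le hsub (hvmin w hws)] at hv
    exact (Finset.mem_filter.mp hv).2
  refine ⟨s.filter fun w => ∃ n, Even n ∧ RelWalk Rs n v w,
    ⟨v, Finset.mem_filter.mpr ⟨hvs, 0, Even.zero, .nil v⟩⟩, Finset.filter_subset _ _, ?_, ?_⟩
  · simp only [Finset.mem_filter]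
    rintro u ⟨-, m, hm, hvu⟩ w ⟨hws, n, hn, hvw⟩ huw
    obtain ⟨ℓ, hwv⟩ := hback hvw hws
    have h₁ := heven ((hvu.trans (.single ⟨huw, hws⟩)).trans hwv)
    have h₂ := heven (hvw.trans hwv)
    rw [Nat.even_iff] at *
    omega
  · simp only [Finset.mem_filter]
    rintro u ⟨-, m, hm, hvu⟩ w hws huw
    have hvw := hvu.trans (.single ⟨huw, hws⟩)
    obtain ⟨ℓ, hwv⟩ := hback hvw hws
    cases hwv with
    | nil => exact absurd (heven hvw) (by simpa [Nat.even_add_one] using hm)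
    | cons hwx _ =>
      exact ⟨_, ⟨hwx.2, _, by simpa [Nat.even_add_one] using hm,
        hvw.trans (.single hwx)⟩, hwx.1⟩

theorem exists_isKernel_of_not_hasOddDirectedCycle (hirr : ∀ v, ¬ R v v)
    (hR : ¬ HasOddDirectedCycle R) (s : Finset V) : ∃ K, IsKernel R s K :=
  exists_isKernel_of_forall_exists_isSemikernel
    (fun _ hs => exists_isSemikernel_of_not_hasOddDirectedCycle hirr hR hs) s

theorem IsKernel.card_filter_sdiff_lt_card_erase [DecidableEq V] [DecidableRel R]
    {s K : Finset V} {L : V → Finset ℕ} {α : ℕ} (hK : IsKernel R (s.filter fun v => α ∈ L v) K)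
    (hL : ∀ v ∈ s, (s.filter (R v)).card < (L v).card) {v : V} (hv : v ∈ s \ K) :
    ((s \ K).filter (R v)).card < ((L v).erase α).card := by
  have hKs : K ⊆ s := hK.subset.trans (Finset.filter_subset _ _)
  obtain ⟨hvs, hvK⟩ := Finset.mem_sdiff.mp hv
  have hsub : (s \ K).filter (R v) ⊆ s.filter (R v) :=
    Finset.filter_subset_filter _ Finset.sdiff_subset
  by_cases hvα : α ∈ L v
  · obtain ⟨u, huK, hvu⟩ := hK.absorbing v (Finset.mem_filter.mpr ⟨hvs, hvα⟩) hvK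
    have hlost : u ∈ s.filter (R v) ∧ u ∉ (s \ K).filter (R v) :=
      ⟨Finset.mem_filter.mpr ⟨hKs huK, hvu⟩,
        fun h => (Finset.mem_sdiff.mp (Finset.mem_filter.mp h).1).2 huK⟩
    have := Finset.card_lt_card ((Finset.ssubset_iff_of_subset hsub).mpr ⟨u, hlost⟩)
    have := hL v hvs
    rw [Finset.card_erase_of_mem hvα]
    omega
  · rw [Finset.erase_eq_of_notMem hvα]
    exact (Finset.card_le_card hsub).trans_lt (hL v hvs)

theorem exists_listColoring_of_forall_exists_isKernel [DecidableRel R]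
    (hK : ∀ s : Finset V, ∃ K, IsKernel R s K) (s : Finset V) (L : V → Finset ℕ)
    (hL : ∀ v ∈ s, (s.filter (R v)).card < (L v).card) :
    ∃ c : V → ℕ, (∀ v ∈ s, c v ∈ L v) ∧ ∀ u ∈ s, ∀ w ∈ s, R u w → c u ≠ c w := by
  classical
  induction s using Finset.strongInduction generalizing L with
  | H s ih =>
  rcases s.eq_empty_or_nonempty with rfl | ⟨v₀, hv₀⟩
  · exact ⟨fun _ => 0, by simp, by simp⟩
  obtain ⟨α, hα⟩ : (L v₀).Nonempty := Finset.card_pos.mp (by have := hL v₀ hv₀; omega)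
  obtain ⟨K, hK⟩ := hK (s.filter fun v => α ∈ L v)
  have hKs : K ⊆ s := hK.subset.trans (Finset.filter_subset _ _)
  have hαK {v} (hv : v ∈ K) : α ∈ L v := (Finset.mem_filter.mp (hK.subset hv)).2
  have hKne : K.Nonempty := by
    by_contra hempty
    obtain ⟨u, hu, -⟩ := hK.absorbing v₀ (Finset.mem_filter.mpr ⟨hv₀, hα⟩)
      (fun h => hempty ⟨v₀, h⟩)
    exact hempty ⟨u, hu⟩
  have hsmaller : s \ K ⊂ s := Finset.sdiff_ssubset hKs hKne
  obtain ⟨c, hcL, hc⟩ := ih (s \ K) hsmaller (fun v => (L v).erase α)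
    (fun _ hv => hK.card_filter_sdiff_lt_card_erase hL hv)
  have hcα {v} (hv : v ∈ s) (hvK : v ∉ K) : c v ≠ α :=
    Finset.ne_of_mem_erase (hcL v (Finset.mem_sdiff.mpr ⟨hv, hvK⟩))
  refine ⟨fun v => if v ∈ K then α else c v, fun v hv => ?_, fun u hu w hw huw => ?_⟩
  · dsimp only
    split_ifs with hvK
    · exact hαK hvK
    · exact Finset.mem_of_mem_erase (hcL v (Finset.mem_sdiff.mpr ⟨hv, hvK⟩))
  · by_cases huK : u ∈ K <;> by_cases hwK : w ∈ K <;> simp only [huK, hwK, if_true, if_false]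
    · exact absurd huw (hK.independent u huK w hwK)
    · exact (hcα hw hwK).symm
    · exact hcα hu huK
    · exact hc u (Finset.mem_sdiff.mpr ⟨hu, huK⟩) w (Finset.mem_sdiff.mpr ⟨hw, hwK⟩) huw

end

/-- Bondy–Bopanna–Siegel. Let `G` be a finite simple graph with an
orientation `D` (i.e. `u` and `v` are adjacent iff exactly one of `u → v`, `v → u` holds)
containing no odd directed cycle. If `L` is a list assignment with
`|L(v)| ≥ outdeg(v) + 1` for every vertex `v`, then `G` is `L`-choosable. -/
theorem choosable_of_orientation_no_odd_cycle {V : Type*} [Fintype V]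
    (G : SimpleGraph V) (D : V → V → Prop)
    (horient : ∀ u v, G.Adj u v ↔ Xor' (D u v) (D v u))
    (hnoodd : ¬ HasOddDirectedCycle D)
    (L : V → Finset ℕ)
    (hL : ∀ v, {w | D v w}.ncard + 1 ≤ (L v).card) :
    IsLChoosable G L := by
  classical
  -- A loop of `D` is no edge of `G` but would leave its vertex without a kernel.
  set R : V → V → Prop := fun u w => D u w ∧ u ≠ w
  have hkernels := exists_isKernel_of_not_hasOddDirectedCycle (R := R) (fun v h => h.2 rfl)
    (fun h => hnoodd (h.mono fun _ _ h => h.1))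
  have hout (v : V) : (Finset.univ.filter (R v)).card < (L v).card := by
    have : (Finset.univ.filter (R v)).card ≤ {w | D v w}.ncard := by
      rw [← Set.ncard_coe_finset]
      exact Set.ncard_le_ncard (by intro w; simp +contextual [R]) (Set.toFinite _)
    have := hL v
    omega
  obtain ⟨c, hcL, hc⟩ := exists_listColoring_of_forall_exists_isKernel hkernels Finset.univ L
    (fun v _ => hout v)
  refine ⟨c, fun v => hcL v (Finset.mem_univ v), fun u w huw => ?_⟩
  rcases (horient u w).mp huw with ⟨hD, -⟩ | ⟨hD, -⟩
  · exact hc u (Finset.mem_univ u) w (Finset.mem_univ w) ⟨hD, huw.ne⟩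
  · exact (hc w (Finset.mem_univ w) u (Finset.mem_univ u) ⟨hD, huw.ne.symm⟩).symm
end

section
/- For integers r, s ≥ 3, let G = C(r,s) be the cylindrical triangulation, and let L be a list assignment on G such that: there exists 1 ≤ j ≤ s for which the exterior vertices (1,j) and (1,j−1) have lists of size exactly 4; every other exterior vertex has a list of size exactly 3; and every interior vertex has a list of size exactly 5. Then G is L-choosable. -/
/-- The neighbour relation of the cylindrical triangulation `C(r,s)`: row `i+1` of
`Fin r` represents the `(i+1)`-st row of `C(r,s)`, and second coordinates are modulo `s`.
`Cnbr r s u v` says that `v` is one of the listed neighbours of `u`. -/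
def Cnbr (r s : ℕ) (u v : Fin r × ZMod s) : Prop :=
  (v.1 = u.1 ∧ (v.2 = u.2 + 1 ∨ v.2 = u.2 - 1)) ∨
  (v.1.val = u.1.val + 1 ∧ (v.2 = u.2 ∨ v.2 = u.2 - 1)) ∨
  (v.1.val + 1 = u.1.val ∧ (v.2 = u.2 ∨ v.2 = u.2 + 1))

/-- The cylindrical triangulation `C(r,s)`, with vertex `(i,j)` (for `1 ≤ i ≤ r` and
`j` modulo `s`) represented by the pair `(⟨i−1⟩ : Fin r, j mod s)`. -/
def C (r s : ℕ) : SimpleGraph (Fin r × ZMod s) where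
  Adj u v := u ≠ v ∧ (Cnbr r s u v ∨ Cnbr r s v u)
  symm := ⟨fun u v h => ⟨h.1.symm, h.2.symm⟩⟩
  loopless := ⟨fun u h => h.1 rfl⟩

/-!
Since `|L(2,j)| = 5 > 4 = |L(1,j)|`, some colour `d ∈ L(2,j)` is missing from `L(1,j)`. Give `(2,j)`
the list `{d}` and colour greedily in the order: `(2,j)`; rows `r, r-1, …, 3`, each traversed
`j, j-1, …, j+1`; then rows `1` and `2` in the zig-zag `(1,j+1), (2,j+1), (1,j+2), …, (1,j-2),
(2,j-2)`, ending with `(2,j-1), (1,j-1), (1,j)`. Every vertex has fewer neighbours before it than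
colours in its list, except `(1,j)`, which has four; but one of them is `(2,j)`, whose colour `d`
cannot clash with any colour of `L(1,j)`.
-/

open Finset

theorem IsLChoosable.mono {V : Type*} {G : SimpleGraph V} {L L' : V → Finset ℕ}
    (h : IsLChoosable G L') (hL : ∀ v, L' v ⊆ L v) : IsLChoosable G L :=
  let ⟨c, hc, hproper⟩ := h
  ⟨c, fun v => hL v (hc v), hproper⟩

theorem isLChoosable_of_card_lt {V α : Type*} [Fintype V] [DecidableEq V] [LinearOrder α]
    {G : SimpleGraph V} [DecidableRel G.Adj] {L : V → Finset ℕ} (rank : V → α)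
    (h : ∀ v, #{u | G.Adj v u ∧ rank u ≤ rank v ∧ ¬Disjoint (L u) (L v)} < #(L v)) :
    IsLChoosable G L := by
  suffices ∀ S : Finset V, ∃ c : V → ℕ,
      (∀ v ∈ S, c v ∈ L v) ∧ ∀ u ∈ S, ∀ v ∈ S, G.Adj u v → c u ≠ c v by
    obtain ⟨c, hc, hproper⟩ := this univ
    exact ⟨c, fun v => hc v (mem_univ v), fun u v => hproper u (mem_univ u) v (mem_univ v)⟩
  intro S
  induction S using Finset.induction_on_max_value rank with
  | empty => exact ⟨fun _ => 0, by simp, by simp⟩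
  | insert a S haS hmax ih =>
    obtain ⟨c, hc, hproper⟩ := ih
    set F := {u ∈ S | G.Adj a u ∧ ¬Disjoint (L u) (L a)}.image c
    have hF : #F < #(L a) := by
      refine (card_image_le.trans (card_le_card fun u hu => ?_)).trans_lt (h a)
      simp only [mem_filter] at hu ⊢
      exact ⟨mem_univ u, hu.2.1, hmax u hu.1, hu.2.2⟩
    obtain ⟨x, hxL, hxF⟩ := exists_mem_notMem_of_card_lt_card hF
    have hx : ∀ u ∈ S, G.Adj a u → c u ≠ x := by
      rintro u hu hau rfl
      exact hxF (mem_image_of_mem c (mem_filter.2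
        ⟨hu, hau, not_disjoint_iff.2 ⟨c u, hc u hu, hxL⟩⟩))
    have hne : ∀ u ∈ S, u ≠ a := fun u hu hua => haS (hua ▸ hu)
    refine ⟨Function.update c a x, fun v hv => ?_, fun u hu v hv huv => ?_⟩
    · rcases mem_insert.1 hv with rfl | hv
      · simpa using hxL
      · simpa [hne v hv] using hc v hv
    · rcases mem_insert.1 hu with rfl | hu' <;> rcases mem_insert.1 hv with rfl | hv'
      · exact (G.ne_of_adj huv rfl).elim
      · simpa [hne v hv'] using (hx v hv' huv).symm
      · simpa [hne u hu'] using hx u hu' huv.symm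
      · simpa [hne u hu', hne v hv'] using hproper u hu' v hv' huv

theorem ZMod.val_add_one_eq_or {n : ℕ} [NeZero n] (a : ZMod n) :
    (a + 1).val = a.val + 1 ∨ a.val + 1 = n ∧ (a + 1).val = 0 := by
  have ha := a.val_lt
  rw [ZMod.val_add, ZMod.val_one_eq_one_mod]
  rcases Nat.lt_or_ge 1 n with hn | hn
  · rw [Nat.mod_eq_of_lt hn]
    rcases Nat.lt_or_ge (a.val + 1) n with h | h
    · exact Or.inl (Nat.mod_eq_of_lt h)
    · exact Or.inr ⟨by omega, by rw [show a.val + 1 = n by omega, Nat.mod_self]⟩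
  · obtain rfl : n = 1 := by have := NeZero.ne n; omega
    exact Or.inr ⟨by omega, Nat.mod_one _⟩

namespace C

variable {r s : ℕ}

/-- Column `x` gets index `(x - j - 1) mod s`, so that `j+1, …, j-1, j` get `0, …, s-2, s-1`. -/
def colIdx (j x : ZMod s) : ℕ := (x - (j + 1)).val

def CycSucc (s a b : ℕ) : Prop := b = a + 1 ∨ a + 1 = s ∧ b = 0

def coords (j : ZMod s) (v : Fin r × ZMod s) : ℕ × ℕ := (v.1.val, colIdx j v.2)

def CoordAdj (s : ℕ) (p q : ℕ × ℕ) : Prop :=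
  q.1 = p.1 ∧ (CycSucc s p.2 q.2 ∨ CycSucc s q.2 p.2) ∨
  q.1 = p.1 + 1 ∧ (q.2 = p.2 ∨ CycSucc s q.2 p.2) ∨
  q.1 + 1 = p.1 ∧ (q.2 = p.2 ∨ CycSucc s p.2 q.2)

section

variable [NeZero s] (j : ZMod s)

lemma colIdx_lt (x : ZMod s) : colIdx j x < s := ZMod.val_lt _

lemma colIdx_injective : Function.Injective (colIdx j) := fun _ _ h =>
  sub_left_injective (ZMod.val_injective s h)

lemma cycSucc_colIdx_add_one (x : ZMod s) : CycSucc s (colIdx j x) (colIdx j (x + 1)) := by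
  unfold colIdx
  rw [add_sub_right_comm]
  exact ZMod.val_add_one_eq_or _

lemma colIdx_self : colIdx j j = s - 1 := by
  have h := cycSucc_colIdx_add_one j j
  have h0 : colIdx j (j + 1) = 0 := by simp [colIdx]
  unfold CycSucc at h
  omega

lemma colIdx_sub_one_self (hs : 2 ≤ s) : colIdx j (j - 1) = s - 2 := by
  have h := cycSucc_colIdx_add_one j (j - 1)
  rw [sub_add_cancel, colIdx_self] at h
  unfold CycSucc at h
  omega

lemma le_colIdx_add_two_iff (hs : 2 ≤ s) {x : ZMod s} :
    s ≤ colIdx j x + 2 ↔ x = j ∨ x = j - 1 := by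
  have hx := colIdx_lt j x
  rw [← (colIdx_injective j).eq_iff, ← (colIdx_injective j).eq_iff, colIdx_self,
    colIdx_sub_one_self j hs]
  omega

lemma coords_injective : Function.Injective (coords (r := r) j) := fun u v h => by
  simp only [coords, Prod.mk.injEq] at h
  exact Prod.ext (Fin.ext h.1) (colIdx_injective j h.2)

lemma card_le_of_coords_mem {S : Finset (Fin r × ZMod s)} {T : Finset (ℕ × ℕ)}
    (h : ∀ u ∈ S, coords j u ∈ T) : #S ≤ #T :=
  card_le_card_of_injOn (coords j) h (coords_injective j).injOn

lemma coordAdj_of_adj {u v : Fin r × ZMod s} (h : (C r s).Adj v u) :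
    CoordAdj s (coords j v) (coords j u) := by
  obtain ⟨a, x⟩ := u
  obtain ⟨b, y⟩ := v
  have h1 := cycSucc_colIdx_add_one j y
  have h2 := cycSucc_colIdx_add_one j (y - 1)
  rw [sub_add_cancel] at h2
  obtain ⟨-, h | h⟩ := h <;> simp only [Cnbr] at h <;>
    rcases h with ⟨hab, rfl | rfl⟩ | ⟨hab, rfl | rfl⟩ | ⟨hab, rfl | rfl⟩ <;>
    simp only [coords, CoordAdj, Fin.ext_iff] at hab ⊢ <;>
    simp_all [add_sub_cancel_right]

end

def phase (r s : ℕ) (p : ℕ × ℕ) : ℕ :=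
  if 2 ≤ p.1 then r - p.1 else if p.1 = 1 ∧ p.2 + 1 = s then 0 else r

def pos (s : ℕ) (p : ℕ × ℕ) : ℕ :=
  if 2 ≤ p.1 then s - 1 - p.2
  else if p.1 = 1 then 2 * p.2 + 1
  else if p.2 + 2 < s then 2 * p.2 else p.2 + s

/-- The greedy order of the header, read in coordinates; `(1, s - 1)` is the vertex `(2,j)`. -/
def key (r s : ℕ) (p : ℕ × ℕ) : ℕ ×ₗ ℕ := toLex (phase r s p, pos s p)

/-- Contains the coordinates of all neighbours that precede `p` in the order `key`, except that
`(1, s - 1)` is left out at `p = (0, s - 1)`: these are `(2,j)` and `(1,j)`, whose lists will be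
disjoint. -/
def earlierCandidates (r s : ℕ) : ℕ × ℕ → Finset (ℕ × ℕ)
  | (i, k) =>
    if 2 ≤ i then
      if i + 1 = r then
        if k = 0 then {(i, 1), (i, s - 1)} else {(i, k + 1), (1, s - 1)}
      else if k = 0 then {(i, 1), (i, s - 1), (i + 1, 0), (i + 1, s - 1)}
      else {(i, k + 1), (i + 1, k), (i + 1, k - 1), (1, s - 1)}
    else if i = 1 then
      if k = 0 then {(1, s - 1), (0, 0), (2, 0), (2, s - 1)}
      else if k + 2 < s then {(1, k - 1), (2, k), (2, k - 1), (0, k)}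
      else if k + 2 = s then {(1, k - 1), (2, k), (2, k - 1), (1, s - 1)}
      else ∅
    else
      if k = 0 then {(1, s - 1)}
      else if k + 2 < s then {(0, k - 1), (1, k - 1)}
      else if k + 2 = s then {(0, k - 1), (1, k), (1, k - 1)}
      else {(0, k - 1), (0, 0), (1, k - 1)}

def listSize (r s : ℕ) (p : ℕ × ℕ) : ℕ :=
  if p.1 = 0 ∧ s ≤ p.2 + 2 then 4 else if p.1 = 0 ∨ p.1 + 1 = r then 3 else 5

set_option maxHeartbeats 1000000 in
lemma mem_earlierCandidates (hs : 3 ≤ s) {p q : ℕ × ℕ} (hp : p.1 < r) (hp2 : p.2 < s)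
    (hq : q.1 < r) (hq2 : q.2 < s) (hadj : CoordAdj s p q) (hle : key r s q ≤ key r s p)
    (hyz : p = (0, s - 1) → q ≠ (1, s - 1)) :
    q ∈ earlierCandidates r s p := by
  obtain ⟨i, k⟩ := p
  obtain ⟨i', k'⟩ := q
  simp only [CoordAdj, CycSucc, key, Prod.Lex.toLex_le_toLex, phase, pos, earlierCandidates] at *
  split_ifs at hle ⊢ <;>
    simp only [mem_insert, mem_singleton, Prod.mk.injEq, notMem_empty, ne_eq] at hyz ⊢ <;> omega

lemma earlierCandidates_one_sub_one (hs : 3 ≤ s) : earlierCandidates r s (1, s - 1) = ∅ := by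
  simp only [earlierCandidates]
  split_ifs <;> first | rfl | omega

lemma card_earlierCandidates_lt_listSize (hr : 3 ≤ r) {p : ℕ × ℕ} (hp : p.1 < r) (hp2 : p.2 < s)
    (hz : p ≠ (1, s - 1)) :
    #(earlierCandidates r s p) < listSize r s p := by
  obtain ⟨i, k⟩ := p
  simp only [earlierCandidates, listSize, ne_eq, Prod.mk.injEq] at *
  split_ifs <;> first
    | omega
    | exact card_le_four.trans_lt (by omega)
    | exact card_le_three.trans_lt (by omega)
    | exact card_le_two.trans_lt (by omega)
    | exact (card_singleton _).trans_lt (by omega)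

variable [NeZero s] (j : ZMod s)

lemma listSize_coords (hs : 2 ≤ s) (v : Fin r × ZMod s) :
    listSize r s (coords j v) =
      if v.1.val = 0 ∧ (v.2 = j ∨ v.2 = j - 1) then 4
      else if v.1.val = 0 ∨ v.1.val = r - 1 then 3 else 5 := by
  have := v.1.isLt
  simp only [listSize, coords, le_colIdx_add_two_iff j hs,
    show v.1.val + 1 = r ↔ v.1.val = r - 1 by omega]

theorem isLChoosable_update_singleton (hr : 3 ≤ r) (hs : 3 ≤ s) {y z : Fin r × ZMod s}
    (hy : coords j y = (0, s - 1)) (hz : coords j z = (1, s - 1))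
    {L : Fin r × ZMod s → Finset ℕ} (hL : ∀ v, listSize r s (coords j v) ≤ #(L v))
    {d : ℕ} (hd : d ∉ L y) :
    IsLChoosable (C r s) (Function.update L z {d}) := by
  classical
  set L' := Function.update L z {d}
  refine isLChoosable_of_card_lt (fun v => key r s (coords j v)) fun v => ?_
  have hF : ∀ u ∈ ({u | (C r s).Adj v u ∧ key r s (coords j u) ≤ key r s (coords j v) ∧
      ¬Disjoint (L' u) (L' v)} : Finset _), coords j u ∈ earlierCandidates r s (coords j v) := by
    intro u hu
    obtain ⟨hadj, hle, hmeet⟩ := (mem_filter.1 hu).2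
    refine mem_earlierCandidates hs v.1.isLt (colIdx_lt j v.2) u.1.isLt (colIdx_lt j u.2)
      (coordAdj_of_adj j hadj) hle fun hvy huz => hmeet ?_
    obtain rfl := coords_injective j (hvy.trans hy.symm)
    obtain rfl := coords_injective j (huz.trans hz.symm)
    have hyz : v ≠ u := fun h => by simp [h, hz] at hy
    simp [L', Function.update_of_ne hyz, hd]
  by_cases hvz : v = z
  · subst hvz
    rw [show earlierCandidates r s (coords j v) = ∅ by
      rw [hz, earlierCandidates_one_sub_one hs]] at hF
    rw [card_eq_zero.2 (eq_empty_of_forall_notMem fun u hu => notMem_empty _ (hF u hu))]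
    simp [L']
  · refine (card_le_of_coords_mem j hF).trans_lt ?_
    rw [show L' v = L v from Function.update_of_ne hvz _ _]
    exact (card_earlierCandidates_lt_listSize hr v.1.isLt (colIdx_lt j v.2)
      fun h => hvz (coords_injective j (h.trans hz.symm))).trans_le (hL v)

end C

/-- For `r, s ≥ 3`, let `L` be a list assignment on the cylindrical
triangulation `C(r,s)` such that: for some `j`, the exterior vertices `(1,j)` and
`(1,j−1)` have lists of size exactly `4`; every other exterior vertex (i.e. vertex in
row `1` or row `r`) has a list of size exactly `3`; and every interior vertex has a list
of size exactly `5`. Then `C(r,s)` is `L`-choosable. -/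
theorem C_choosable (r s : ℕ) (hr : 3 ≤ r) (hs : 3 ≤ s)
    (L : Fin r × ZMod s → Finset ℕ) (j : ZMod s)
    (h4a : (L (⟨0, by omega⟩, j)).card = 4)
    (h4b : (L (⟨0, by omega⟩, j - 1)).card = 4)
    (h3 : ∀ v : Fin r × ZMod s, (v.1.val = 0 ∨ v.1.val = r - 1) →
      v ≠ (⟨0, by omega⟩, j) → v ≠ (⟨0, by omega⟩, j - 1) → (L v).card = 3)
    (h5 : ∀ v : Fin r × ZMod s, ¬ (v.1.val = 0 ∨ v.1.val = r - 1) → (L v).card = 5) :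
    IsLChoosable (C r s) L := by
  have : NeZero s := ⟨by omega⟩
  have hcoords (i : Fin r) : C.coords j (i, j) = (i.val, s - 1) := by
    simp [C.coords, C.colIdx_self]
  obtain ⟨d, hdz, hdy⟩ := exists_mem_notMem_of_card_lt_card (s := L (⟨0, by omega⟩, j))
    (t := L (⟨1, by omega⟩, j)) (by rw [h4a, h5 _ (by simp; omega)]; norm_num)
  refine (C.isLChoosable_update_singleton j hr hs (hcoords ⟨0, by omega⟩) (hcoords ⟨1, by omega⟩)
    (fun v => (?_ : #(L v) = _).ge) hdy).mono fun v => ?_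
  · rw [C.listSize_coords j (by omega)]
    split_ifs with hyw hext
    · obtain ⟨hi, hx | hx⟩ := hyw
      · rwa [show v = (⟨0, by omega⟩, j) from Prod.ext (Fin.ext hi) hx]
      · rwa [show v = (⟨0, by omega⟩, j - 1) from Prod.ext (Fin.ext hi) hx]
    · exact h3 v hext (by rintro rfl; exact hyw ⟨rfl, Or.inl rfl⟩)
        (by rintro rfl; exact hyw ⟨rfl, Or.inr rfl⟩)
    · exact h5 v hext
  · by_cases hv : v = (⟨1, by omega⟩, j)
    · subst hv; simpa using hdz
    · simp [Function.update_of_ne hv]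
end

section
/- Let G be a finite 3-regular bipartite graph whose vertex set is partitioned into two independent sets A and B. Let L be a list assignment that assigns a list of size 3 to each vertex in A and a list of size 2 to each vertex in B. Then G is L-choosable. -/
open Finset

namespace SimpleGraph

variable {V : Type*} {G : SimpleGraph V}

theorem IsRegularOfDegree.exists_injective_adj [G.LocallyFinite] {d : ℕ}
    (hG : G.IsRegularOfDegree d) (hd : d ≠ 0) :
    ∃ f : V → V, Function.Injective f ∧ ∀ v, G.Adj v (f v) := by
  classical
  obtain ⟨f, hf, hfN⟩ :=
    (all_card_le_biUnion_card_iff_exists_injective (G.neighborFinset ·)).1 fun s ↦ by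
      refine Nat.le_of_mul_le_mul_right (card_mul_le_card_mul G.Adj (fun v hv ↦ ?_)
        (fun w _ ↦ ?_)) (Nat.pos_of_ne_zero hd)
      · rw [← hG v, ← card_neighborFinset_eq_degree]
        exact card_le_card fun w hw ↦ mem_filter.2
          ⟨mem_biUnion.2 ⟨v, hv, hw⟩, (G.mem_neighborFinset v w).1 hw⟩
      · rw [← hG w, ← card_neighborFinset_eq_degree]
        exact card_le_card fun v hv ↦ (G.mem_neighborFinset w v).2 (mem_filter.1 hv).2.symm
  exact ⟨f, hf, fun v ↦ (G.mem_neighborFinset v (f v)).1 (hfN v)⟩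

/-- A kernel of `U` for the arcs `r`, with independence taken in `G` rather than in `r`. -/
def IsKernel (G : SimpleGraph V) (r : V → V → Prop) (U K : Finset V) : Prop :=
  K ⊆ U ∧ G.IsIndepSet K ∧ ∀ v ∈ U, v ∉ K → ∃ w ∈ K, r v w

theorem IsKernel.card_filter_sdiff_lt_card_erase [DecidableEq V] {α : Type*} [DecidableEq α]
    {r : V → V → Prop} [DecidableRel r] {U K : Finset V}
    {L : V → Finset α} {x : α} (hK : IsKernel G r {v ∈ U | x ∈ L v} K) {v : V} (hv : v ∈ U \ K)
    (hL : #{w ∈ U | r v w} < #(L v)) :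
    #{w ∈ U \ K | r v w} < #((L v).erase x) := by
  obtain ⟨hvU, hvK⟩ := mem_sdiff.1 hv
  by_cases hx : x ∈ L v
  · obtain ⟨w, hwK, hvw⟩ := hK.2.2 v (mem_filter.2 ⟨hvU, hx⟩) hvK
    have hw : w ∈ {w ∈ U | r v w} := mem_filter.2 ⟨(mem_filter.1 (hK.1 hwK)).1, hvw⟩
    have hsub : {w ∈ U \ K | r v w} ⊆ {w ∈ U | r v w}.erase w := fun y hy ↦ by
      obtain ⟨hyUK, hvy⟩ := mem_filter.1 hy
      exact mem_erase.2 ⟨fun h ↦ (mem_sdiff.1 hyUK).2 (h ▸ hwK),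
        mem_filter.2 ⟨(mem_sdiff.1 hyUK).1, hvy⟩⟩
    have := card_le_card hsub
    rw [card_erase_of_mem hw] at this
    rw [card_erase_of_mem hx]
    have := card_pos.2 ⟨w, hw⟩
    omega
  · rw [erase_eq_of_notMem hx]
    exact (card_le_card (filter_subset_filter _ sdiff_subset)).trans_lt hL

theorem exists_listColoring_of_forall_exists_isKernel {α : Type*} [Nonempty α]
    (G : SimpleGraph V) (r : V → V → Prop) [DecidableRel r] (hker : ∀ U, ∃ K, IsKernel G r U K)
    (U : Finset V) (L : V → Finset α) (hL : ∀ v ∈ U, #{w ∈ U | r v w} < #(L v)) :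
    ∃ c : V → α, (∀ v ∈ U, c v ∈ L v) ∧ ∀ u ∈ U, ∀ v ∈ U, G.Adj u v → c u ≠ c v := by
  classical
  induction U using Finset.strongInduction generalizing L with
  | H U ih =>
  obtain rfl | ⟨v₀, hv₀⟩ := U.eq_empty_or_nonempty
  · exact ⟨fun _ ↦ Classical.arbitrary α, by simp, by simp⟩
  obtain ⟨x, hx⟩ : (L v₀).Nonempty := card_pos.1 (Nat.zero_lt_of_lt (hL v₀ hv₀))
  obtain ⟨K, hK⟩ := hker {v ∈ U | x ∈ L v}
  have hKU : K ⊆ U := hK.1.trans (filter_subset _ _)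
  have hKx : ∀ v ∈ K, x ∈ L v := fun v hv ↦ (mem_filter.1 (hK.1 hv)).2
  have hK_nonempty : K.Nonempty := by
    by_cases hv₀K : v₀ ∈ K
    · exact ⟨v₀, hv₀K⟩
    · obtain ⟨w, hw, -⟩ := hK.2.2 v₀ (mem_filter.2 ⟨hv₀, hx⟩) hv₀K
      exact ⟨w, hw⟩
  obtain ⟨c, hcL, hc⟩ := ih (U \ K) (sdiff_ssubset hKU hK_nonempty) (fun v ↦ (L v).erase x)
    fun v hv ↦ hK.card_filter_sdiff_lt_card_erase hv (hL v (mem_sdiff.1 hv).1)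
  have hc_ne : ∀ v ∈ U, v ∉ K → c v ≠ x := fun v hv hvK ↦
    ne_of_mem_erase (hcL v (mem_sdiff.2 ⟨hv, hvK⟩))
  refine ⟨fun v ↦ if v ∈ K then x else c v, fun v hv ↦ ?_, fun u hu v hv huv ↦ ?_⟩
  · dsimp only
    split_ifs with hvK
    · exact hKx v hvK
    · exact mem_of_mem_erase (hcL v (mem_sdiff.2 ⟨hv, hvK⟩))
  · dsimp only
    split_ifs with huK hvK hvK
    · exact absurd huv (hK.2.1 huK hvK huv.ne)
    · exact (hc_ne v hv hvK).symm
    · exact hc_ne u hu huK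
    · exact hc u (mem_sdiff.2 ⟨hu, huK⟩) v (mem_sdiff.2 ⟨hv, hvK⟩) huv

variable {A : Set V} {f : V → V}

def matchingOrientation (G : SimpleGraph V) (A : Set V) (f : V → V) (u v : V) : Prop :=
  (u ∈ A ∧ G.Adj u v ∧ f u ≠ v) ∨ (u ∉ A ∧ v ∈ A ∧ f v = u)

/-- A fixed point `T` of this operator is the part outside `A` of a kernel of `U`: a vertex `b`
may stay in `T` only if every vertex of `A` matched to `b` is absorbed by another vertex of `T`. -/
def kernelStep (G : SimpleGraph V) (A : Set V) (f : V → V) (U : Finset V) : Set V →o Set V where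
  toFun T := {b | b ∈ U ∧ b ∉ A ∧ ∀ a ∈ U, a ∈ A → f a = b → ∃ b' ∈ T, G.Adj a b' ∧ b' ≠ b}
  monotone' _ _ hTT' _ hb := ⟨hb.1, hb.2.1, fun a ha haA hab ↦
    (hb.2.2 a ha haA hab).imp fun _ h ↦ ⟨hTT' h.1, h.2⟩⟩

theorem exists_isKernel_of_isFixedPt (hA : G.IsIndepSet A) (hAc : G.IsIndepSet Aᶜ)
    {U : Finset V} {T : Set V} (hT : Function.IsFixedPt (kernelStep G A f U) T) :
    ∃ K, IsKernel G (G.matchingOrientation A f) U K := by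
  classical
  have hT_mem : ∀ b ∈ T, b ∈ kernelStep G A f U T := fun b hb ↦ hT.symm ▸ hb
  refine ⟨{v ∈ U | v ∈ T ∨ (v ∈ A ∧ ∀ b ∈ T, ¬ G.Adj v b)}, filter_subset _ _, ?_, ?_⟩
  · intro u hu v hv _ huv
    obtain ⟨-, hu | ⟨huA, huT⟩⟩ := mem_filter.1 hu <;>
      obtain ⟨-, hv | ⟨hvA, hvT⟩⟩ := mem_filter.1 hv
    · exact hAc (hT_mem u hu).2.1 (hT_mem v hv).2.1 huv.ne huv
    · exact hvT u hu huv.symm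
    · exact huT v hv huv
    · exact hA huA hvA huv.ne huv
  · intro v hvU hvK
    have hT_K : ∀ b ∈ T, b ∈ {v ∈ U | v ∈ T ∨ (v ∈ A ∧ ∀ b ∈ T, ¬ G.Adj v b)} :=
      fun b hb ↦ mem_filter.2 ⟨(hT_mem b hb).1, Or.inl hb⟩
    simp only [mem_filter, hvU, true_and, not_or, not_and, not_forall, not_not] at hvK
    obtain ⟨hvT, hvA_adj⟩ := hvK
    by_cases hvA : v ∈ A
    · obtain ⟨b, hbT, hvb⟩ := hvA_adj hvA
      by_cases hfv : f v = b
      · -- the matching partner `b` of `v` lies in `T`, so `v` has a second neighbour in `T`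
        obtain ⟨b', hb'T, hvb', hb'b⟩ := (hT_mem b hbT).2.2 v hvU hvA hfv
        exact ⟨b', hT_K b' hb'T, Or.inl ⟨hvA, hvb', hfv ▸ hb'b.symm⟩⟩
      · exact ⟨b, hT_K b hbT, Or.inl ⟨hvA, hvb, hfv⟩⟩
    · have hv_step : ¬ ∀ a ∈ U, a ∈ A → f a = v → ∃ b' ∈ T, G.Adj a b' ∧ b' ≠ v :=
        fun h ↦ hvT (hT ▸ (show v ∈ kernelStep G A f U T from ⟨hvU, hvA, h⟩))
      push Not at hv_step
      obtain ⟨a, haU, haA, hav, ha⟩ := hv_step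
      refine ⟨a, mem_filter.2 ⟨haU, Or.inr ⟨haA, fun b hbT hab ↦ ?_⟩⟩, Or.inr ⟨hvA, haA, hav⟩⟩
      exact hvT (ha b hbT hab ▸ hbT)

theorem exists_isKernel_matchingOrientation (hA : G.IsIndepSet A) (hAc : G.IsIndepSet Aᶜ)
    (f : V → V) (U : Finset V) : ∃ K, IsKernel G (G.matchingOrientation A f) U K :=
  exists_isKernel_of_isFixedPt hA hAc (OrderHom.map_lfp (kernelStep G A f U))

variable [DecidableRel (G.matchingOrientation A f)] {u : V}

theorem card_filter_matchingOrientation_lt_degree [Fintype (G.neighborSet u)] (hu : u ∈ A)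
    (hf : G.Adj u (f u)) (U : Finset V) : #{w ∈ U | G.matchingOrientation A f u w} < G.degree u := by
  classical
  have hsub : {w ∈ U | G.matchingOrientation A f u w} ⊆ (G.neighborFinset u).erase (f u) :=
    fun w hw ↦ by
      obtain ⟨-, huw, hfw⟩ | ⟨hu', -⟩ := (mem_filter.1 hw).2
      · exact mem_erase.2 ⟨hfw.symm, (G.mem_neighborFinset u w).2 huw⟩
      · exact absurd hu hu'
  calc #{w ∈ U | G.matchingOrientation A f u w}
      ≤ #((G.neighborFinset u).erase (f u)) := card_le_card hsub
    _ < #(G.neighborFinset u) := card_erase_lt_of_mem ((G.mem_neighborFinset u _).2 hf)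
    _ = G.degree u := card_neighborFinset_eq_degree G u

theorem card_filter_matchingOrientation_le_one (hu : u ∉ A) (hf : Set.InjOn f A)
    (U : Finset V) : #{w ∈ U | G.matchingOrientation A f u w} ≤ 1 := by
  refine card_le_one.2 fun v hv w hw ↦ ?_
  obtain ⟨hu', -⟩ | ⟨-, hvA, hfv⟩ := (mem_filter.1 hv).2
  · exact absurd hu' hu
  obtain ⟨hu', -⟩ | ⟨-, hwA, hfw⟩ := (mem_filter.1 hw).2
  · exact absurd hu' hu
  exact hf hvA hwA (hfv.trans hfw.symm)

end SimpleGraph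

theorem cubic_bipartite_choosable_general {V : Type*} [Fintype V] (G : SimpleGraph V)
    (A B : Set V) (hunion : A ∪ B = Set.univ)
    (hAind : ∀ u ∈ A, ∀ v ∈ A, ¬ G.Adj u v)
    (hBind : ∀ u ∈ B, ∀ v ∈ B, ¬ G.Adj u v)
    (hreg : ∀ v, (G.neighborSet v).ncard = 3)
    (L : V → Finset ℕ)
    (hLA : ∀ v ∈ A, (L v).card = 3) (hLB : ∀ v ∈ B, (L v).card = 2) :
    IsLChoosable G L := by
  classical
  have hB : ∀ v, v ∉ A → v ∈ B := fun v hv ↦ (Set.eq_univ_iff_forall.1 hunion v).resolve_left hv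
  have hG : G.IsRegularOfDegree 3 := fun v ↦ by
    rw [← G.card_neighborSet_eq_degree, ← Nat.card_eq_fintype_card, Nat.card_coe_set_eq, hreg v]
  obtain ⟨f, hf, hfG⟩ := hG.exists_injective_adj three_ne_zero
  have hker := SimpleGraph.exists_isKernel_matchingOrientation (fun u hu v hv _ ↦ hAind u hu v hv)
    (fun u hu v hv _ ↦ hBind u (hB u hu) v (hB v hv)) f
  have hout : ∀ v ∈ (univ : Finset V), #{w ∈ univ | G.matchingOrientation A f v w} < #(L v) := by
    intro v _
    by_cases hv : v ∈ A
    · rw [hLA v hv, ← hG v]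
      exact SimpleGraph.card_filter_matchingOrientation_lt_degree hv (hfG v) univ
    · rw [hLB v (hB v hv)]
      exact Nat.lt_succ_of_le (SimpleGraph.card_filter_matchingOrientation_le_one hv hf.injOn univ)
  obtain ⟨c, hcL, hc⟩ := G.exists_listColoring_of_forall_exists_isKernel _ hker univ L hout
  exact ⟨c, fun v ↦ hcL v (mem_univ v), fun u v huv ↦ hc u (mem_univ u) v (mem_univ v) huv⟩

/-- Lemma 6.1. Let `G` be a finite `3`-regular bipartite graph with
vertex set partitioned into independent sets `A` and `B`. If `L` assigns a list of size
`3` to each vertex of `A` and a list of size `2` to each vertex of `B`, then `G` is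
`L`-choosable. -/
theorem cubic_bipartite_choosable {V : Type*} [Fintype V] (G : SimpleGraph V)
    (A B : Set V) (hunion : A ∪ B = Set.univ) (hdisj : A ∩ B = ∅)
    (hAind : ∀ u ∈ A, ∀ v ∈ A, ¬ G.Adj u v)
    (hBind : ∀ u ∈ B, ∀ v ∈ B, ¬ G.Adj u v)
    (hreg : ∀ v, (G.neighborSet v).ncard = 3)
    (L : V → Finset ℕ)
    (hLA : ∀ v ∈ A, (L v).card = 3) (hLB : ∀ v ∈ B, (L v).card = 2) :
    IsLChoosable G L :=
  cubic_bipartite_choosable_general G A B hunion hAind hBind hreg L hLA hLB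
end
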